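/- arXiv:2112.15248 — 9 statements merged into one kernel-verified Lean document; each statement's English description precedes it below -/
import Mathlib

section
/- Let L be a finite lattice and K a convex sublattice of L. Then the restriction map re : Con L → Con K, sending a congruence α of L to its restriction α↾K, is a lattice homomorphism preserving the bottom and top elements (i.e., a bounded lattice homomorphism). -/
/-- A lattice congruence on `L`. -/
structure LatCon (L : Type*) [Lattice L] where
  r : L → L → Prop
  refl : ∀ x, r x x
  symm : ∀ {x y}, r x y → r y x
  trans : ∀ {x y z}, r x y → r y z → r x z
  sup_compat : ∀ {x y} (z : L), r x y → r (x ⊔ z) (y ⊔ z)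
  inf_compat : ∀ {x y} (z : L), r x y → r (x ⊓ z) (y ⊓ z)

namespace LatCon

variable {L : Type*} [Lattice L]

theorem ext' : ∀ {a b : LatCon L}, a.r = b.r → a = b
  | ⟨_, _, _, _, _, _⟩, ⟨_, _, _, _, _, _⟩, rfl => rfl

instance : PartialOrder (LatCon L) where
  le a b := ∀ x y, a.r x y → b.r x y
  le_refl _ _ _ h := h
  le_trans _ _ _ hab hbc x y h := hbc x y (hab x y h)
  le_antisymm a b hab hba := ext' (by
    funext x y
    exact propext ⟨hab x y, hba x y⟩)

instance : InfSet (LatCon L) where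
  sInf S :=
    { r := fun x y => ∀ c ∈ S, c.r x y
      refl := fun x c _ => c.refl x
      symm := fun h c hc => c.symm (h c hc)
      trans := fun h h' c hc => c.trans (h c hc) (h' c hc)
      sup_compat := fun z h c hc => c.sup_compat z (h c hc)
      inf_compat := fun z h c hc => c.inf_compat z (h c hc) }

noncomputable instance : CompleteLattice (LatCon L) :=
  completeLatticeOfInf (LatCon L) (fun S =>
    ⟨fun c hc x y h => h c hc, fun _ hb x y h c hc => hb hc x y h⟩)

/-- Restriction of a congruence of `L` to a sublattice `K`. -/
def restrict (K : Sublattice L) (c : LatCon L) : LatCon K where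
  r x y := c.r (x : L) (y : L)
  refl x := c.refl (x : L)
  symm h := c.symm h
  trans h h' := c.trans h h'
  sup_compat z h := by simpa using c.sup_compat (z : L) h
  inf_compat z h := by simpa using c.inf_compat (z : L) h

end LatCon

/-!
Meets, `⊥` and `⊤` of congruences are computed pointwise (`⊥` is equality, `⊤` is the full
relation), so restriction preserves them for any sublattice. The join `α ⊔ β` relates `x` and `y`
iff they are linked by a finite chain of `α`- and `β`-steps. For `x, y ∈ K`, the lattice
polynomial `z ↦ (z ⊔ (x ⊓ y)) ⊓ (x ⊔ y)` fixes `x` and `y`, maps every `α`- or `β`-step to a step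
of the same kind, and by convexity takes its values in `K`; so it moves the chain into `K`.
-/

namespace LatCon

variable {L : Type*} [Lattice L]

theorem ext {a b : LatCon L} (h : ∀ x y, a.r x y ↔ b.r x y) : a = b :=
  ext' (funext₂ fun x y => propext (h x y))

theorem sInf_r {S : Set (LatCon L)} {x y : L} : (sInf S).r x y ↔ ∀ c ∈ S, c.r x y :=
  Iff.rfl

def eq : LatCon L where
  r := Eq
  refl _ := rfl
  symm h := h.symm
  trans h h' := h.trans h'
  sup_compat _ h := by rw [h]
  inf_compat _ h := by rw [h]

theorem bot_r {x y : L} : (⊥ : LatCon L).r x y ↔ x = y :=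
  ⟨fun h => (bot_le : ⊥ ≤ eq) x y h, fun h => h ▸ (⊥ : LatCon L).refl x⟩

def chainSup (α β : LatCon L) : LatCon L where
  r := Relation.ReflTransGen fun a b => α.r a b ∨ β.r a b
  refl _ := .refl
  symm h :=
    haveI : Std.Symm fun a b => α.r a b ∨ β.r a b := ⟨fun _ _ h => h.imp α.symm β.symm⟩
    Std.Symm.symm _ _ h
  trans h h' := h.trans h'
  sup_compat z h := Relation.ReflTransGen.lift (· ⊔ z)
    (fun _ _ h => h.imp (α.sup_compat z) (β.sup_compat z)) _ _ h
  inf_compat z h := Relation.ReflTransGen.lift (· ⊓ z)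
    (fun _ _ h => h.imp (α.inf_compat z) (β.inf_compat z)) _ _ h

theorem sup_r {α β : LatCon L} {x y : L} :
    (α ⊔ β).r x y ↔ Relation.ReflTransGen (fun a b => α.r a b ∨ β.r a b) x y := by
  constructor
  · refine fun h => (sup_le (α := LatCon L) (c := chainSup α β) ?_ ?_) x y h
    · exact fun _ _ h => .single (.inl h)
    · exact fun _ _ h => .single (.inr h)
  · intro h
    induction h with
    | refl => exact (α ⊔ β).refl x
    | tail _ step ih =>
      exact (α ⊔ β).trans ih (step.elim ((le_sup_left : α ≤ α ⊔ β) _ _)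
        ((le_sup_right : β ≤ α ⊔ β) _ _))

theorem restrict_r {K : Sublattice L} {c : LatCon L} {x y : K} :
    (restrict K c).r x y ↔ c.r x y :=
  Iff.rfl

theorem restrict_mono (K : Sublattice L) : Monotone (restrict K) :=
  fun _ _ h x y => h x y

theorem restrict_sInf (K : Sublattice L) (S : Set (LatCon L)) :
    restrict K (sInf S) = sInf (restrict K '' S) :=
  ext fun _ _ => by simp only [restrict_r, sInf_r, Set.forall_mem_image]

theorem restrict_inf (K : Sublattice L) (α β : LatCon L) :
    restrict K (α ⊓ β) = restrict K α ⊓ restrict K β := by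
  rw [← sInf_pair, restrict_sInf, Set.image_pair, sInf_pair]

theorem restrict_top (K : Sublattice L) : restrict K (⊤ : LatCon L) = ⊤ := by
  rw [← sInf_empty, restrict_sInf, Set.image_empty, sInf_empty]

theorem restrict_bot (K : Sublattice L) : restrict K (⊥ : LatCon L) = ⊥ :=
  ext fun _ _ => by rw [restrict_r, bot_r, bot_r, Subtype.ext_iff]

theorem restrict_sup {K : Sublattice L}
    (hconv : ∀ a b x : L, a ∈ K → b ∈ K → a ≤ x → x ≤ b → x ∈ K) (α β : LatCon L) :
    restrict K (α ⊔ β) = restrict K α ⊔ restrict K β := by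
  refine le_antisymm (fun x y h => ?_)
    (sup_le (restrict_mono K le_sup_left) (restrict_mono K le_sup_right))
  have clamp_mem (z : L) : (z ⊔ x ⊓ y) ⊓ (x ⊔ y) ∈ K :=
    hconv _ _ _ (K.infClosed x.2 y.2) (K.supClosed x.2 y.2)
      (le_inf le_sup_right (inf_le_left.trans le_sup_left)) inf_le_right
  let clamp : L → K := fun z => ⟨(z ⊔ x ⊓ y) ⊓ (x ⊔ y), clamp_mem z⟩
  have clamp_x : clamp x = x := Subtype.ext (by simp only [clamp, sup_inf_self, inf_sup_self])
  have clamp_y : clamp y = y := Subtype.ext (by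
    simp only [clamp, inf_comm (x : L), sup_comm (x : L), sup_inf_self, inf_sup_self])
  rw [restrict_r, sup_r] at h
  rw [sup_r, ← clamp_x, ← clamp_y]
  exact Relation.ReflTransGen.lift clamp (fun _ _ step => step.imp
    (fun h => α.inf_compat _ (α.sup_compat _ h)) (fun h => β.inf_compat _ (β.sup_compat _ h))) _ _ h

end LatCon

theorem restriction_is_bounded_lattice_hom_general {L : Type*} [Lattice L]
    (K : Sublattice L) (hconv : ∀ a b x : L, a ∈ K → b ∈ K → a ≤ x → x ≤ b → x ∈ K) :
    (∀ α β : LatCon L, LatCon.restrict K (α ⊔ β) = LatCon.restrict K α ⊔ LatCon.restrict K β) ∧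
    (∀ α β : LatCon L, LatCon.restrict K (α ⊓ β) = LatCon.restrict K α ⊓ LatCon.restrict K β) ∧
    LatCon.restrict K (⊥ : LatCon L) = ⊥ ∧
    LatCon.restrict K (⊤ : LatCon L) = ⊤ :=
  ⟨LatCon.restrict_sup hconv, LatCon.restrict_inf K, LatCon.restrict_bot K, LatCon.restrict_top K⟩

/-- for a finite lattice `L` and a convex sublattice `K`, the
restriction map `Con L → Con K` is a bounded lattice homomorphism. -/
theorem restriction_is_bounded_lattice_hom {L : Type*} [Lattice L] [Finite L]
    (K : Sublattice L) (hconv : ∀ a b x : L, a ∈ K → b ∈ K → a ≤ x → x ≤ b → x ∈ K) :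
    (∀ α β : LatCon L, LatCon.restrict K (α ⊔ β) = LatCon.restrict K α ⊔ LatCon.restrict K β) ∧
    (∀ α β : LatCon L, LatCon.restrict K (α ⊓ β) = LatCon.restrict K α ⊓ LatCon.restrict K β) ∧
    LatCon.restrict K (⊥ : LatCon L) = ⊥ ∧
    LatCon.restrict K (⊤ : LatCon L) = ⊤ :=
  restriction_is_bounded_lattice_hom_general K hconv
end

section
/- Let D and E be finite distributive lattices, P = Ji(D), Q = Ji(E). For every isotone map ψ : Q → P, the map Down(ψ) : D → E defined by Down(ψ)(e) = ⋁{ x ∈ Q : ψ(x) ≤ e } is a bounded lattice homomorphism. -/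
open scoped Classical

/-- `Down ψ e = ⋁ { x ∈ Ji E : ψ x ≤ e }`, interpreting `ψ` on the
join-irreducible elements of `E`. -/
noncomputable def Down {D E : Type*} [Lattice D] [Lattice E] [OrderBot E] [Fintype E]
    (ψ : E → D) (e : D) : E :=
  (Finset.univ.filter fun x : E => SupIrred x ∧ ψ x ≤ e).sup id

/-- if `ψ : Ji E → Ji D` is isotone, then `Down ψ : D → E` is a
bounded lattice homomorphism. -/
theorem down_map_is_bounded_lattice_hom {D E : Type*}
    [DistribLattice D] [BoundedOrder D] [Fintype D]
    [DistribLattice E] [BoundedOrder E] [Fintype E]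
    (ψ : E → D)
    (hJi : ∀ x : E, SupIrred x → SupIrred (ψ x))
    (hiso : ∀ x y : E, SupIrred x → SupIrred y → x ≤ y → ψ x ≤ ψ y) :
    (∀ a b : D, Down ψ (a ⊔ b) = Down ψ a ⊔ Down ψ b) ∧
    (∀ a b : D, Down ψ (a ⊓ b) = Down ψ a ⊓ Down ψ b) ∧
    Down ψ (⊥ : D) = ⊥ ∧ Down ψ (⊤ : D) = ⊤ := by
  have hmono : ∀ a b : D, a ≤ b → Down ψ a ≤ Down ψ b := by
    intro a b hab
    apply Finset.sup_mono
    intro x hx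
    simp only [Finset.mem_filter] at *
    exact ⟨hx.1, hx.2.1, hx.2.2.trans hab⟩
  have hmem_le : ∀ (x : E) (d : D), SupIrred x → ψ x ≤ d → x ≤ Down ψ d := by
    intro x d hx hψ
    exact Finset.le_sup (f := id) (by simp [hx, hψ])
  -- key: if z is supIrred and z ≤ Down ψ d, then ψ z ≤ d
  have hkey : ∀ (z : E) (d : D), SupIrred z → z ≤ Down ψ d → ψ z ≤ d := by
    intro z d hz hle
    obtain ⟨x, hx, hzx⟩ := (hz.supPrime.le_finset_sup).mp hle
    simp only [Finset.mem_filter] at hx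
    exact (hiso z x hz hx.2.1 hzx).trans hx.2.2
  refine ⟨?_, ?_, ?_, ?_⟩
  · intro a b
    apply le_antisymm
    · apply Finset.sup_le
      intro x hx
      simp only [Finset.mem_filter] at hx
      obtain ⟨_, hxirr, hxle⟩ := hx
      rcases (hJi x hxirr).supPrime.le_sup.mp hxle with h | h
      · exact le_sup_of_le_left (hmem_le x a hxirr h)
      · exact le_sup_of_le_right (hmem_le x b hxirr h)
    · exact sup_le (hmono a _ le_sup_left) (hmono b _ le_sup_right)
  · intro a b
    apply le_antisymm
    · exact le_inf (hmono _ a inf_le_left) (hmono _ b inf_le_right)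
    · obtain ⟨s, hs, hsirr⟩ := exists_supIrred_decomposition (Down ψ a ⊓ Down ψ b)
      rw [← hs]
      apply Finset.sup_le
      intro z hz
      have hzirr := hsirr hz
      have hzle : z ≤ Down ψ a ⊓ Down ψ b := hs ▸ Finset.le_sup (f := id) hz
      exact hmem_le z (a ⊓ b) hzirr
        (le_inf (hkey z a hzirr (hzle.trans inf_le_left))
          (hkey z b hzirr (hzle.trans inf_le_right)))
  · apply le_antisymm _ bot_le
    apply Finset.sup_le
    intro x hx
    simp only [Finset.mem_filter, le_bot_iff] at hx
    exact absurd hx.2.2 (hJi x hx.2.1).ne_bot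
  · apply le_antisymm le_top
    obtain ⟨s, hs, hsirr⟩ := exists_supIrred_decomposition (⊤ : E)
    rw [← hs]
    exact Finset.sup_le fun z hz => hmem_le z ⊤ (hsirr hz) le_top
end

section
/- Let D and E be finite distributive lattices and φ : D → E a bounded lattice homomorphism. Then φ is surjective if and only if the associated isotone map Ji(φ) : Ji(E) → Ji(D) is an order-embedding (i.e., Ji(φ)(x) ≤ Ji(φ)(y) if and only if x ≤ y). -/
open scoped Classical

/-- `JiMap f x = min { e ∈ D : x ≤ f e }`, computed as the meet of that set. -/
noncomputable def JiMap {D E : Type*} [Lattice D] [OrderTop D] [Fintype D] [Lattice E]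
    (f : D → E) (x : E) : D :=
  (Finset.univ.filter fun e : D => x ≤ f e).inf id

set_option linter.unusedSectionVars false
section Aux

variable {D E : Type*} [DistribLattice D] [BoundedOrder D] [Fintype D]
    [DistribLattice E] [BoundedOrder E] [Fintype E] (φ : BoundedLatticeHom D E)

lemma le_phi_jiMap (x : E) : x ≤ φ (JiMap ⇑φ x) := by
  rw [JiMap, show φ ((Finset.univ.filter fun e : D => x ≤ φ e).inf id)
      = (Finset.univ.filter fun e : D => x ≤ φ e).inf fun e => φ e from
    map_finset_inf φ _ _]
  exact Finset.le_inf fun e he => (Finset.mem_filter.mp he).2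

lemma jiMap_galois (x : E) (e : D) : JiMap ⇑φ x ≤ e ↔ x ≤ φ e := by
  constructor
  · intro h
    exact (le_phi_jiMap φ x).trans (OrderHomClass.mono φ h)
  · intro h
    exact Finset.inf_le (by simpa using h)

lemma jiMap_supIrred {x : E} (hx : SupIrred x) : SupIrred (JiMap ⇑φ x) := by
  constructor
  · intro hmin
    have : JiMap ⇑φ x ≤ ⊥ := hmin bot_le
    rw [jiMap_galois, map_bot, le_bot_iff] at this
    exact hx.ne_bot this
  · intro b c hbc
    have hx' : SupPrime x := hx.supPrime
    have : x ≤ φ b ⊔ φ c := by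
      rw [← map_sup, hbc]; exact le_phi_jiMap φ x
    rcases hx'.le_sup.mp this with h | h
    · left
      exact le_antisymm (hbc ▸ le_sup_left) ((jiMap_galois φ x b).mpr h)
    · right
      exact le_antisymm (hbc ▸ le_sup_right) ((jiMap_galois φ x c).mpr h)

end Aux

/-- a bounded lattice homomorphism between finite distributive
lattices is surjective iff the associated isotone map `Ji φ : Ji E → Ji D` is
an order-embedding. -/
theorem surjective_iff_ji_order_embedding {D E : Type*}
    [DistribLattice D] [BoundedOrder D] [Fintype D]
    [DistribLattice E] [BoundedOrder E] [Fintype E]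
    (φ : BoundedLatticeHom D E) :
    Function.Surjective ⇑φ ↔
      ∀ x y : E, SupIrred x → SupIrred y →
        (JiMap ⇑φ x ≤ JiMap ⇑φ y ↔ x ≤ y) := by
  constructor
  · intro hsurj x y _ _
    constructor
    · intro h
      obtain ⟨d, hd⟩ := hsurj y
      have h1 : φ (JiMap ⇑φ y) ≤ y := by
        have : JiMap ⇑φ y ≤ d := (jiMap_galois φ y d).mpr hd.ge
        calc φ (JiMap ⇑φ y) ≤ φ d := OrderHomClass.mono φ this
          _ = y := hd
      exact (le_phi_jiMap φ x).trans ((OrderHomClass.mono φ h).trans h1)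
    · intro h
      exact (jiMap_galois φ x (JiMap ⇑φ y)).mpr (h.trans (le_phi_jiMap φ y))
  · intro h x
    obtain ⟨s, hsx, hs⟩ := exists_supIrred_decomposition x
    refine ⟨s.sup (JiMap ⇑φ), le_antisymm ?_ ?_⟩
    · -- φ (sup JiMap a) ≤ x : decompose φ d into irreducibles
      set d := s.sup (JiMap ⇑φ)
      obtain ⟨t, htd, ht⟩ := exists_supIrred_decomposition (φ d)
      rw [← htd]
      refine Finset.sup_le fun b hb => ?_
      have hbirr := ht hb
      have hbd : b ≤ φ d := htd ▸ Finset.le_sup (f := id) hb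
      have : JiMap ⇑φ b ≤ s.sup (JiMap ⇑φ) := (jiMap_galois φ b d).mpr hbd
      obtain ⟨a, ha, hba⟩ := ((jiMap_supIrred φ hbirr).supPrime.le_finset_sup).mp this
      have hax : a ≤ x := hsx ▸ Finset.le_sup (f := id) ha
      exact ((h b a hbirr (hs ha)).mp hba).trans hax
    · -- x ≤ φ (sup JiMap a)
      rw [show φ (s.sup (JiMap ⇑φ)) = s.sup fun a => φ (JiMap ⇑φ a) from
        map_finset_sup φ _ _]
      calc x = s.sup id := hsx.symm
        _ ≤ s.sup fun a => φ (JiMap ⇑φ a) :=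
          Finset.sup_mono_fun fun a _ => le_phi_jiMap φ a
end

section
/- Let L be a lattice that is a gluing of an ideal A and a filter B (so L = A ∪ B and A ∩ B ≠ ∅). Let α_A be a congruence of A and α_B a congruence of B with α_A↾(A∩B) = α_B↾(A∩B). Then the relation α = α_A ∪ α_B ∪ (α_A ∘ α_B) ∪ (α_B ∘ α_A) is a congruence of L, it satisfies α↾A = α_A and α↾B = α_B, and it is the unique congruence of L with these restrictions. -/
/-- `r` is a (lattice) congruence on the subset `S` of `L`: an equivalence
relation on `S` compatible with joins and meets. A congruence on `L` itself is
`IsConOn Set.univ r`. -/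
def IsConOn {L : Type*} [Lattice L] (S : Set L) (r : L → L → Prop) : Prop :=
  (∀ x y, r x y → x ∈ S ∧ y ∈ S) ∧
  (∀ x ∈ S, r x x) ∧
  (∀ x y, r x y → r y x) ∧
  (∀ x y z, r x y → r y z → r x z) ∧
  (∀ x y z, r x y → z ∈ S → r (x ⊔ z) (y ⊔ z) ∧ r (x ⊓ z) (y ⊓ z))

/-- Restriction of a relation to a subset. -/
def restr {L : Type*} (S : Set L) (r : L → L → Prop) : L → L → Prop :=
  fun x y => r x y ∧ x ∈ S ∧ y ∈ S

/-- The glued relation `α_A ∪ α_B ∪ (α_A ∘ α_B) ∪ (α_B ∘ α_A)`. -/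
def glueRel {L : Type*} (a b : L → L → Prop) : L → L → Prop :=
  fun x y => a x y ∨ b x y ∨ (∃ t, a x t ∧ b t y) ∨ (∃ t, b x t ∧ a t y)

/-- congruences of the ideal `A` and the filter `B` of a gluing
`L = A ∪ B` that agree on `A ∩ B` extend uniquely to a congruence of `L`,
given by `α_A ∪ α_B ∪ (α_A ∘ α_B) ∪ (α_B ∘ α_A)`. -/
theorem gluing_congruence_extension {L : Type*} [Lattice L] (A B : Set L)
    (hAdown : ∀ x ∈ A, ∀ y : L, y ≤ x → y ∈ A)
    (hAsup : ∀ x ∈ A, ∀ y ∈ A, x ⊔ y ∈ A)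
    (hBup : ∀ x ∈ B, ∀ y : L, x ≤ y → y ∈ B)
    (hBinf : ∀ x ∈ B, ∀ y ∈ B, x ⊓ y ∈ B)
    (hcover : A ∪ B = Set.univ) (hne : (A ∩ B).Nonempty)
    (αA αB : L → L → Prop) (hαA : IsConOn A αA) (hαB : IsConOn B αB)
    (hagree : restr (A ∩ B) αA = restr (A ∩ B) αB) :
    IsConOn Set.univ (glueRel αA αB) ∧
    restr A (glueRel αA αB) = αA ∧
    restr B (glueRel αA αB) = αB ∧
    (∀ γ : L → L → Prop, IsConOn Set.univ γ →
      restr A γ = αA → restr B γ = αB → γ = glueRel αA αB) := by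
  obtain ⟨c, hcA, hcB⟩ := hne
  obtain ⟨hAdom, hArefl, hAsym, hAtr, hAco⟩ := hαA
  obtain ⟨hBdom, hBrefl, hBsym, hBtr, hBco⟩ := hαB
  have mem : ∀ x : L, x ∈ A ∨ x ∈ B := by
    intro x
    have : x ∈ A ∪ B := by rw [hcover]; trivial
    exact this
  -- agreement on A ∩ B
  have AtoB : ∀ x y, αA x y → x ∈ B → y ∈ B → αB x y := by
    intro x y h hx hy
    have hd := hAdom x y h
    have key := congrFun (congrFun hagree x) y
    exact ((iff_of_eq key).mp ⟨h, ⟨hd.1, hx⟩, ⟨hd.2, hy⟩⟩).1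
  have BtoA : ∀ x y, αB x y → x ∈ A → y ∈ A → αA x y := by
    intro x y h hx hy
    have hd := hBdom x y h
    have key := congrFun (congrFun hagree x) y
    exact ((iff_of_eq key).mpr ⟨h, ⟨hx, hd.1⟩, ⟨hy, hd.2⟩⟩).1
  -- compatibility bridges
  have CAj : ∀ x y z, αA x y → z ∈ B → αB (x ⊔ z) (y ⊔ z) := by
    intro x y z h hz
    have hd := hAdom x y h
    set c' := c ⊓ z with hc'
    have hc'A : c' ∈ A := hAdown c hcA c' inf_le_left
    have hc'B : c' ∈ B := hBinf c hcB z hz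
    have h1 : αA (x ⊔ c') (y ⊔ c') := (hAco x y c' h hc'A).1
    have hx' : x ⊔ c' ∈ B := hBup c' hc'B _ le_sup_right
    have hy' : y ⊔ c' ∈ B := hBup c' hc'B _ le_sup_right
    have h2 : αB (x ⊔ c') (y ⊔ c') := AtoB _ _ h1 hx' hy'
    have h3 := (hBco _ _ z h2 hz).1
    have e : ∀ w : L, w ⊔ c' ⊔ z = w ⊔ z := by
      intro w
      rw [sup_assoc, sup_eq_right.mpr (inf_le_right : c' ≤ z)]
    rwa [e, e] at h3
  have CAm : ∀ x y z, αA x y → z ∈ B → αA (x ⊓ z) (y ⊓ z) := by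
    intro x y z h hz
    have hd := hAdom x y h
    set W := x ⊔ y ⊔ c with hW
    have hWA : W ∈ A := hAsup _ (hAsup x hd.1 y hd.2) c hcA
    have hWB : W ∈ B := hBup c hcB _ le_sup_right
    set w := z ⊓ W with hw
    have hwA : w ∈ A := hAdown W hWA w inf_le_right
    have h1 : αA (x ⊓ w) (y ⊓ w) := (hAco x y w h hwA).2
    have ex : x ⊓ w = x ⊓ z := by
      rw [hw, ← inf_assoc]
      exact inf_eq_left.mpr (le_trans inf_le_left (le_trans le_sup_left le_sup_left))
    have ey : y ⊓ w = y ⊓ z := by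
      rw [hw, ← inf_assoc]
      exact inf_eq_left.mpr (le_trans inf_le_left (le_trans le_sup_right le_sup_left))
    rwa [ex, ey] at h1
  have CBm : ∀ x y z, αB x y → z ∈ A → αA (x ⊓ z) (y ⊓ z) := by
    intro x y z h hz
    set c' := c ⊔ z with hc'
    have hc'A : c' ∈ A := hAsup c hcA z hz
    have hc'B : c' ∈ B := hBup c hcB _ le_sup_left
    have h1 : αB (x ⊓ c') (y ⊓ c') := (hBco x y c' h hc'B).2
    have hd := hBdom x y h
    have hx' : x ⊓ c' ∈ A := hAdown c' hc'A _ inf_le_right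
    have hy' : y ⊓ c' ∈ A := hAdown c' hc'A _ inf_le_right
    have h2 : αA (x ⊓ c') (y ⊓ c') := BtoA _ _ h1 hx' hy'
    have h3 := (hAco _ _ z h2 hz).2
    have e : ∀ w : L, w ⊓ c' ⊓ z = w ⊓ z := by
      intro w
      rw [inf_assoc, inf_eq_right.mpr (le_sup_right : z ≤ c')]
    rwa [e, e] at h3
  have CBj : ∀ x y z, αB x y → z ∈ A → αB (x ⊔ z) (y ⊔ z) := by
    intro x y z h hz
    have hd := hBdom x y h
    set W := x ⊓ y ⊓ c with hW
    have hWB : W ∈ B := hBinf _ (hBinf x hd.1 y hd.2) c hcB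
    have hWA : W ∈ A := hAdown c hcA _ inf_le_right
    set w := z ⊔ W with hw
    have hwB : w ∈ B := hBup W hWB w le_sup_right
    have h1 : αB (x ⊔ w) (y ⊔ w) := (hBco x y w h hwB).1
    have ex : x ⊔ w = x ⊔ z := by
      rw [hw, ← sup_assoc]
      exact sup_eq_left.mpr
        (le_trans inf_le_left (le_trans inf_le_left le_sup_left))
    have ey : y ⊔ w = y ⊔ z := by
      rw [hw, ← sup_assoc]
      exact sup_eq_left.mpr
        (le_trans inf_le_left (le_trans inf_le_right le_sup_left))
    rwa [ex, ey] at h1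
  -- symmetry
  have gsym : ∀ x y, glueRel αA αB x y → glueRel αA αB y x := by
    rintro x y (h | h | ⟨t, h1, h2⟩ | ⟨t, h1, h2⟩)
    · exact Or.inl (hAsym _ _ h)
    · exact Or.inr (Or.inl (hBsym _ _ h))
    · exact Or.inr (Or.inr (Or.inr ⟨t, hBsym _ _ h2, hAsym _ _ h1⟩))
    · exact Or.inr (Or.inr (Or.inl ⟨t, hAsym _ _ h2, hBsym _ _ h1⟩))
  -- transitivity steps
  have stepA : ∀ x y z, glueRel αA αB x y → αA y z → glueRel αA αB x z := by
    rintro x y z (h | h | ⟨t, h1, h2⟩ | ⟨t, h1, h2⟩) h'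
    · exact Or.inl (hAtr _ _ _ h h')
    · exact Or.inr (Or.inr (Or.inr ⟨y, h, h'⟩))
    · -- x αA t, t αB y, y αA z : collapse middle
      have hyB := (hBdom t y h2).2
      have hyA := (hAdom y z h').1
      have htA := (hAdom x t h1).2
      have htB := (hBdom t y h2).1
      have : αA t y := BtoA _ _ h2 htA hyA
      exact Or.inl (hAtr _ _ _ (hAtr _ _ _ h1 this) h')
    · exact Or.inr (Or.inr (Or.inr ⟨t, h1, hAtr _ _ _ h2 h'⟩))
  have stepB : ∀ x y z, glueRel αA αB x y → αB y z → glueRel αA αB x z := by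
    rintro x y z (h | h | ⟨t, h1, h2⟩ | ⟨t, h1, h2⟩) h'
    · exact Or.inr (Or.inr (Or.inl ⟨y, h, h'⟩))
    · exact Or.inr (Or.inl (hBtr _ _ _ h h'))
    · exact Or.inr (Or.inr (Or.inl ⟨t, h1, hBtr _ _ _ h2 h'⟩))
    · have hyA := (hAdom t y h2).2
      have hyB := (hBdom y z h').1
      have htB := (hBdom x t h1).2
      have htA := (hAdom t y h2).1
      have : αB t y := AtoB _ _ h2 htB hyB
      exact Or.inr (Or.inl (hBtr _ _ _ (hBtr _ _ _ h1 this) h'))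
  have gtr : ∀ x y z, glueRel αA αB x y → glueRel αA αB y z → glueRel αA αB x z := by
    rintro x y z g (h | h | ⟨t, h1, h2⟩ | ⟨t, h1, h2⟩)
    · exact stepA _ _ _ g h
    · exact stepB _ _ _ g h
    · exact stepB _ _ _ (stepA _ _ _ g h1) h2
    · exact stepA _ _ _ (stepB _ _ _ g h1) h2
  -- compatibility of the glued relation
  have gco : ∀ x y z, glueRel αA αB x y →
      glueRel αA αB (x ⊔ z) (y ⊔ z) ∧ glueRel αA αB (x ⊓ z) (y ⊓ z) := by
    intro x y z h
    rcases mem z with hz | hz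
    · rcases h with h | h | ⟨t, h1, h2⟩ | ⟨t, h1, h2⟩
      · exact ⟨Or.inl (hAco x y z h hz).1, Or.inl (hAco x y z h hz).2⟩
      · exact ⟨Or.inr (Or.inl (CBj x y z h hz)), Or.inl (CBm x y z h hz)⟩
      · refine ⟨Or.inr (Or.inr (Or.inl ⟨t ⊔ z, (hAco x t z h1 hz).1, CBj t y z h2 hz⟩)),
          Or.inl (hAtr _ _ _ (hAco x t z h1 hz).2 (CBm t y z h2 hz))⟩
      · refine ⟨Or.inr (Or.inr (Or.inr ⟨t ⊔ z, CBj x t z h1 hz, (hAco t y z h2 hz).1⟩)),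
          Or.inl (hAtr _ _ _ (CBm x t z h1 hz) (hAco t y z h2 hz).2)⟩
    · rcases h with h | h | ⟨t, h1, h2⟩ | ⟨t, h1, h2⟩
      · exact ⟨Or.inr (Or.inl (CAj x y z h hz)), Or.inl (CAm x y z h hz)⟩
      · exact ⟨Or.inr (Or.inl (hBco x y z h hz).1), Or.inr (Or.inl (hBco x y z h hz).2)⟩
      · refine ⟨Or.inr (Or.inl (hBtr _ _ _ (CAj x t z h1 hz) (hBco t y z h2 hz).1)),
          Or.inr (Or.inr (Or.inl ⟨t ⊓ z, CAm x t z h1 hz, (hBco t y z h2 hz).2⟩))⟩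
      · refine ⟨Or.inr (Or.inl (hBtr _ _ _ (hBco x t z h1 hz).1 (CAj t y z h2 hz))),
          Or.inr (Or.inr (Or.inr ⟨t ⊓ z, (hBco x t z h1 hz).2, CAm t y z h2 hz⟩))⟩
  refine ⟨⟨fun x y _ => ⟨trivial, trivial⟩,
      fun x _ => ?_, gsym, gtr, fun x y z h _ => gco x y z h⟩, ?_, ?_, ?_⟩
  · rcases mem x with hx | hx
    · exact Or.inl (hArefl x hx)
    · exact Or.inr (Or.inl (hBrefl x hx))
  · -- restr A (glueRel αA αB) = αA
    funext x y
    apply propext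
    constructor
    · rintro ⟨(h | h | ⟨t, h1, h2⟩ | ⟨t, h1, h2⟩), hx, hy⟩
      · exact h
      · exact BtoA _ _ h hx hy
      · have htA := (hAdom x t h1).2
        have hyB := (hBdom t y h2).2
        have htB := (hBdom t y h2).1
        exact hAtr _ _ _ h1 (BtoA _ _ h2 htA hy)
      · have hxB := (hBdom x t h1).1
        have htB := (hBdom x t h1).2
        have htA := (hAdom t y h2).1
        exact hAtr _ _ _ (BtoA _ _ h1 hx htA) h2
    · intro h
      exact ⟨Or.inl h, (hAdom x y h).1, (hAdom x y h).2⟩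
  · -- restr B (glueRel αA αB) = αB
    funext x y
    apply propext
    constructor
    · rintro ⟨(h | h | ⟨t, h1, h2⟩ | ⟨t, h1, h2⟩), hx, hy⟩
      · exact AtoB _ _ h hx hy
      · exact h
      · have hxA := (hAdom x t h1).1
        have htA := (hAdom x t h1).2
        have htB := (hBdom t y h2).1
        exact hBtr _ _ _ (AtoB _ _ h1 hx htB) h2
      · have htB := (hBdom x t h1).2
        have htA := (hAdom t y h2).1
        exact hBtr _ _ _ h1 (AtoB _ _ h2 htB hy)
    · intro h
      exact ⟨Or.inr (Or.inl h), (hBdom x y h).1, (hBdom x y h).2⟩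
  · -- uniqueness
    intro γ hγ h1 h2
    obtain ⟨_, gre, gsy, gtrγ, gcoγ⟩ := hγ
    have γA : ∀ x y, γ x y → x ∈ A → y ∈ A → αA x y := by
      intro x y h hx hy
      have key := congrFun (congrFun h1 x) y
      exact (iff_of_eq key).mp ⟨h, hx, hy⟩
    have Aγ : ∀ x y, αA x y → γ x y := by
      intro x y h
      have key := congrFun (congrFun h1 x) y
      exact ((iff_of_eq key).mpr h).1
    have γB : ∀ x y, γ x y → x ∈ B → y ∈ B → αB x y := by
      intro x y h hx hy
      have key := congrFun (congrFun h2 x) y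
      exact (iff_of_eq key).mp ⟨h, hx, hy⟩
    have Bγ : ∀ x y, αB x y → γ x y := by
      intro x y h
      have key := congrFun (congrFun h2 x) y
      exact ((iff_of_eq key).mpr h).1
    funext x y
    apply propext
    constructor
    · intro h
      have hxj : γ (x ⊔ y) (y ⊔ y) := (gcoγ x y y h trivial).1
      have hγjy : γ (x ⊔ y) y := by rwa [sup_idem] at hxj
      have hxm : γ (x ⊓ y) (y ⊓ y) := (gcoγ x y y h trivial).2
      have hγmy : γ (x ⊓ y) y := by rwa [inf_idem] at hxm
      have hγxj : γ x (x ⊔ y) := gtrγ _ _ _ h (gsy _ _ hγjy)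
      have hγxm : γ x (x ⊓ y) := gtrγ _ _ _ h (gsy _ _ hγmy)
      rcases mem x with hx | hx <;> rcases mem y with hy | hy
      · exact Or.inl (γA _ _ h hx hy)
      · -- x ∈ A, y ∈ B : find t ∈ A ∩ B with αA x t and αB t y
        set j := x ⊔ y with hj
        set m := x ⊓ y with hm
        have hjB : j ∈ B := hBup y hy j le_sup_right
        have hmA : m ∈ A := hAdown x hx m inf_le_left
        set c₁ := c ⊓ j with hc₁
        have hc₁A : c₁ ∈ A := hAdown c hcA c₁ inf_le_left
        have hc₁B : c₁ ∈ B := hBinf c hcB j hjB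
        set t := m ⊔ c₁ with ht
        have htA : t ∈ A := hAsup m hmA c₁ hc₁A
        have htB : t ∈ B := hBup c₁ hc₁B t le_sup_right
        have hγmj : γ m j := gtrγ _ _ _ hγmy (gsy _ _ hγjy)
        have h3 : γ (m ⊔ c₁) (j ⊔ c₁) := (gcoγ m j c₁ hγmj trivial).1
        have hjc : j ⊔ c₁ = j := sup_eq_left.mpr inf_le_right
        have hγtj : γ t j := by rwa [hjc] at h3
        have hγxt : γ x t := gtrγ _ _ _ hγxj (gsy _ _ hγtj)
        have hγty : γ t y := gtrγ _ _ _ hγtj hγjy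
        exact Or.inr (Or.inr (Or.inl ⟨t, γA _ _ hγxt hx htA, γB _ _ hγty htB hy⟩))
      · -- x ∈ B, y ∈ A : find t ∈ A ∩ B with αB x t and αA t y
        set j := x ⊔ y with hj
        set m := x ⊓ y with hm
        have hjB : j ∈ B := hBup x hx j le_sup_left
        have hmA : m ∈ A := hAdown y hy m inf_le_right
        set c₂ := c ⊔ m with hc₂
        have hc₂A : c₂ ∈ A := hAsup c hcA m hmA
        have hc₂B : c₂ ∈ B := hBup c hcB c₂ le_sup_left
        set t := j ⊓ c₂ with ht
        have htB : t ∈ B := hBinf j hjB c₂ hc₂B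
        have htA : t ∈ A := hAdown c₂ hc₂A t inf_le_right
        have hγmj : γ m j := gtrγ _ _ _ hγmy (gsy _ _ hγjy)
        have h3 : γ (m ⊓ c₂) (j ⊓ c₂) := (gcoγ m j c₂ hγmj trivial).2
        have hmc : m ⊓ c₂ = m := inf_eq_left.mpr le_sup_right
        have hγmt : γ m t := by rwa [hmc] at h3
        have hγxt : γ x t := gtrγ _ _ _ hγxm hγmt
        have hγty : γ t y := gtrγ _ _ _ (gsy _ _ hγmt) hγmy
        exact Or.inr (Or.inr (Or.inr ⟨t, γB _ _ hγxt hx htB, γA _ _ hγty htA hy⟩))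
      · exact Or.inr (Or.inl (γB _ _ h hx hy))
    · rintro (h | h | ⟨t, ha, hb⟩ | ⟨t, ha, hb⟩)
      · exact Aγ _ _ h
      · exact Bγ _ _ h
      · exact gtrγ _ _ _ (Aγ _ _ ha) (Bγ _ _ hb)
      · exact gtrγ _ _ _ (Bγ _ _ ha) (Aγ _ _ hb)
end

section
/- Let L be a lattice with an element c, and suppose L is a triple gluing of convex sublattices U, V, X = ↓c, Y = ↑c (satisfying properties (Pi)–(Pv)). Then U ∪ Y is a sublattice of L in which U is an ideal and Y is a filter. -/
/-- in a triple gluing of `U`, `V`, `X = ↓c`, `Y = ↑c`, the set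
`U ∪ Y` is a sublattice of `L` in which `U` is an ideal and `Y` is a filter. -/
theorem triple_gluing_U_union_Y_sublattice
    {L : Type*} [Lattice L] (U V : Set L) (c : L)
    -- U and V are convex sublattices
    (hUsub : ∀ x ∈ U, ∀ y ∈ U, x ⊔ y ∈ U ∧ x ⊓ y ∈ U)
    (hUconv : ∀ a ∈ U, ∀ b ∈ U, ∀ x : L, a ≤ x → x ≤ b → x ∈ U)
    (hVsub : ∀ x ∈ V, ∀ y ∈ V, x ⊔ y ∈ V ∧ x ⊓ y ∈ V)
    (hVconv : ∀ a ∈ V, ∀ b ∈ V, ∀ x : L, a ≤ x → x ≤ b → x ∈ V)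
    -- L is the union of U, V, X = ↓c, Y = ↑c
    (hcover : U ∪ V ∪ Set.Iic c ∪ Set.Ici c = Set.univ)
    -- (Pi): A = U ∪ X is an ideal of L
    (hAdown : ∀ x ∈ U ∪ Set.Iic c, ∀ y : L, y ≤ x → y ∈ U ∪ Set.Iic c)
    (hAsup : ∀ x ∈ U ∪ Set.Iic c, ∀ y ∈ U ∪ Set.Iic c, x ⊔ y ∈ U ∪ Set.Iic c)
    -- (Pii): B = V ∪ Y is a filter of L
    (hBup : ∀ x ∈ V ∪ Set.Ici c, ∀ y : L, x ≤ y → y ∈ V ∪ Set.Ici c)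
    (hBinf : ∀ x ∈ V ∪ Set.Ici c, ∀ y ∈ V ∪ Set.Ici c, x ⊓ y ∈ V ∪ Set.Ici c)
    -- (Piii): U is a filter of A (X = ↓c is automatically an ideal of A)
    (hUfilter : ∀ a ∈ U ∪ Set.Iic c, ∀ u ∈ U, u ≤ a → a ∈ U)
    -- (Piv): V is an ideal of B (Y = ↑c is automatically a filter of B)
    (hVideal : ∀ b ∈ V ∪ Set.Ici c, ∀ v ∈ V, b ≤ v → b ∈ V)
    -- (Pv)
    (hPv : U ∩ V = {c}) :
    (∀ x ∈ U ∪ Set.Ici c, ∀ y ∈ U ∪ Set.Ici c,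
        x ⊔ y ∈ U ∪ Set.Ici c ∧ x ⊓ y ∈ U ∪ Set.Ici c) ∧
    (∀ x ∈ U ∪ Set.Ici c, ∀ u ∈ U, x ≤ u → x ∈ U) ∧
    (∀ x ∈ U ∪ Set.Ici c, ∀ y ∈ Set.Ici c, y ≤ x → x ∈ Set.Ici c) := by
  have hcU : c ∈ U := by
    have : c ∈ U ∩ V := by rw [hPv]; rfl
    exact this.1
  refine ⟨?_, ?_, ?_⟩
  · rintro x (hx | hx) y (hy | hy)
    · exact ⟨Or.inl (hUsub x hx y hy).1, Or.inl (hUsub x hx y hy).2⟩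
    · constructor
      · exact Or.inr (le_trans hy le_sup_right)
      · refine Or.inl (hUconv (x ⊓ c) (hUsub x hx c hcU).2 x hx _ ?_ inf_le_left)
        exact le_inf inf_le_left (le_trans inf_le_right hy)
    · constructor
      · exact Or.inr (le_trans hx le_sup_left)
      · refine Or.inl (hUconv (y ⊓ c) (hUsub y hy c hcU).2 y hy _ ?_ inf_le_right)
        exact le_inf (le_trans inf_le_right hx) inf_le_left
    · exact ⟨Or.inr (le_trans hx le_sup_left), Or.inr (le_inf hx hy)⟩
  · rintro x (hx | hx) u hu hxu
    · exact hx
    · exact hUconv c hcU u hu x hx hxu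
  · rintro x _ y hy hyx
    exact le_trans hy hyx
end

section
/- Let L be a lattice with element c that is a triple gluing of convex sublattices U, V, X = ↓c, Y = ↑c. Let α_X, α_Y, α_U, α_V be congruences on X, Y, U, V respectively satisfying the compatibility conditions: α_X↾(U∩X) = α_U↾(U∩X), α_X↾(V∩X) = α_V↾(V∩X), α_Y↾(V∩Y) = α_V↾(V∩Y), and α_Y↾(U∩Y) = α_U↾(U∩Y). Then there exists a unique congruence α on L with α↾X = α_X, α↾Y = α_Y, α↾U = α_U, and α↾V = α_V. -/
namespace TG

variable {L : Type*} [Lattice L] {S T : Set L} {r s : L → L → Prop}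

lemma mem_of (h : IsConOn S r) {a b : L} (hab : r a b) : a ∈ S ∧ b ∈ S := h.1 a b hab
lemma refl_of (h : IsConOn S r) {a : L} (ha : a ∈ S) : r a a := h.2.1 a ha
lemma symm_of (h : IsConOn S r) {a b : L} (hab : r a b) : r b a := h.2.2.1 a b hab
lemma trans_of (h : IsConOn S r) {a b c : L} : r a b → r b c → r a c := h.2.2.2.1 a b c
lemma sub_of (h : IsConOn S r) {a b z : L} (hab : r a b) (hz : z ∈ S) :
    r (a ⊔ z) (b ⊔ z) ∧ r (a ⊓ z) (b ⊓ z) := h.2.2.2.2 a b z hab hz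

lemma sandwich (h : IsConOn S r) {a b m : L} (hab : r a b) (h1 : a ≤ m) (h2 : m ≤ b)
    (hm : m ∈ S) : r a m ∧ r m b := by
  have j := (sub_of h hab hm).1
  have k := (sub_of h hab hm).2
  rw [sup_eq_right.mpr h1, sup_eq_left.mpr h2] at j
  rw [inf_eq_left.mpr h1, inf_eq_right.mpr h2] at k
  exact ⟨k, j⟩

lemma mj (h : IsConOn S r) {a b : L} (hab : r a b) : r (a ⊓ b) (a ⊔ b) := by
  have hb := (mem_of h hab).2
  have j := (sub_of h hab hb).1
  have k := (sub_of h hab hb).2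
  rw [sup_idem] at j
  rw [inf_idem] at k
  exact trans_of h k (symm_of h j)

lemma of_mj (h : IsConOn S r) {a b : L} (ha : a ∈ S) (hb : b ∈ S)
    (hm : r (a ⊓ b) (a ⊔ b)) : r a b := by
  have h1 := (sandwich h hm inf_le_left le_sup_left ha).2
  have h2 := (sandwich h hm inf_le_right le_sup_right hb).2
  exact trans_of h h1 (symm_of h h2)

omit [Lattice L] in
lemma restr_restr (h : T ⊆ S) (r : L → L → Prop) : restr T (restr S r) = restr T r := by
  funext x y
  apply propext
  constructor
  · rintro ⟨⟨h1, _, _⟩, h2, h3⟩; exact ⟨h1, h2, h3⟩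
  · rintro ⟨h1, h2, h3⟩; exact ⟨⟨h1, h h2, h h3⟩, h2, h3⟩

lemma isConOn_restr (h : IsConOn S r) (hT : T ⊆ S)
    (hTj : ∀ x ∈ T, ∀ y ∈ T, x ⊔ y ∈ T) (hTm : ∀ x ∈ T, ∀ y ∈ T, x ⊓ y ∈ T) :
    IsConOn T (restr T r) := by
  refine ⟨fun x y hh => ⟨hh.2.1, hh.2.2⟩, fun x hx => ⟨refl_of h (hT hx), hx, hx⟩,
    fun x y hxy => ⟨symm_of h hxy.1, hxy.2.2, hxy.2.1⟩,
    fun x y z h1 h2 => ⟨trans_of h h1.1 h2.1, h1.2.1, h2.2.2⟩,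
    fun x y z hxy hz => ⟨⟨(sub_of h hxy.1 (hT hz)).1, hTj _ hxy.2.1 _ hz, hTj _ hxy.2.2 _ hz⟩,
      ⟨(sub_of h hxy.1 (hT hz)).2, hTm _ hxy.2.1 _ hz, hTm _ hxy.2.2 _ hz⟩⟩⟩

omit [Lattice L] in
lemma restr_iff (h : restr S r = s) {a b : L} (ha : a ∈ S) (hb : b ∈ S) :
    r a b ↔ s a b := by
  constructor
  · intro hr; rw [← h]; exact ⟨hr, ha, hb⟩
  · intro hs; rw [← h] at hs; exact hs.1

/-- Context for Hall–Dilworth style gluing of congruences along an ideal `P`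
and a filter `Q` of `S = P ∪ Q`. -/
structure GlueCtx (L : Type*) [Lattice L] where
  P : Set L
  Q : Set L
  e : L
  heP : e ∈ P
  heQ : e ∈ Q
  hPj : ∀ x ∈ P, ∀ y ∈ P, x ⊔ y ∈ P
  hPm : ∀ x ∈ P, ∀ y ∈ P, x ⊓ y ∈ P
  hQj : ∀ x ∈ Q, ∀ y ∈ Q, x ⊔ y ∈ Q
  hQm : ∀ x ∈ Q, ∀ y ∈ Q, x ⊓ y ∈ Q
  hSj : ∀ x ∈ P ∪ Q, ∀ y ∈ P ∪ Q, x ⊔ y ∈ P ∪ Q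
  hSm : ∀ x ∈ P ∪ Q, ∀ y ∈ P ∪ Q, x ⊓ y ∈ P ∪ Q
  hSconv : ∀ a ∈ P ∪ Q, ∀ b ∈ P ∪ Q, ∀ x : L, a ≤ x → x ≤ b → x ∈ P ∪ Q
  hPd : ∀ s ∈ P ∪ Q, ∀ p ∈ P, s ≤ p → s ∈ P
  hQu : ∀ s ∈ P ∪ Q, ∀ q ∈ Q, q ≤ s → s ∈ Q
  θP : L → L → Prop
  θQ : L → L → Prop
  hP : IsConOn P θP
  hQ : IsConOn Q θQ
  hAg : ∀ x y, x ∈ P → x ∈ Q → y ∈ P → y ∈ Q → (θP x y ↔ θQ x y)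

namespace GlueCtx

variable {L : Type*} [Lattice L] (C : GlueCtx L)

lemma hPS : C.P ⊆ C.P ∪ C.Q := Set.subset_union_left
lemma hQS : C.Q ⊆ C.P ∪ C.Q := Set.subset_union_right

/-- One-step transfer: a `θP`-pair joined with an element of `Q` is a `θQ`-pair. -/
lemma transferUp {u v w : L} (h : C.θP u v) (hw : w ∈ C.Q) : C.θQ (u ⊔ w) (v ⊔ w) := by
  obtain ⟨hu, hv⟩ := C.hP.1 u v h
  have huwS : u ⊔ w ∈ C.P ∪ C.Q := C.hSj _ (C.hPS hu) _ (C.hQS hw)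
  have hvwS : v ⊔ w ∈ C.P ∪ C.Q := C.hSj _ (C.hPS hv) _ (C.hQS hw)
  have huwQ : u ⊔ w ∈ C.Q := C.hQu _ huwS _ hw le_sup_right
  have hvwQ : v ⊔ w ∈ C.Q := C.hQu _ hvwS _ hw le_sup_right
  set e2 := C.e ⊓ ((u ⊔ w) ⊓ (v ⊔ w)) with he2
  have he2Q : e2 ∈ C.Q := C.hQm _ C.heQ _ (C.hQm _ huwQ _ hvwQ)
  have he2P : e2 ∈ C.P := C.hPd _ (C.hQS he2Q) _ C.heP inf_le_left
  have h1 : C.θP (u ⊔ e2) (v ⊔ e2) := (C.hP.2.2.2.2 u v e2 h he2P).1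
  have hue2P : u ⊔ e2 ∈ C.P := C.hPj _ hu _ he2P
  have hve2P : v ⊔ e2 ∈ C.P := C.hPj _ hv _ he2P
  have hue2Q : u ⊔ e2 ∈ C.Q := C.hQu _ (C.hPS hue2P) _ he2Q le_sup_right
  have hve2Q : v ⊔ e2 ∈ C.Q := C.hQu _ (C.hPS hve2P) _ he2Q le_sup_right
  have h2 : C.θQ (u ⊔ e2) (v ⊔ e2) := (C.hAg _ _ hue2P hue2Q hve2P hve2Q).mp h1
  have h3 := (C.hQ.2.2.2.2 _ _ w h2 hw).1
  have e2u : u ⊔ e2 ⊔ w = u ⊔ w := by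
    apply le_antisymm
    · exact sup_le (sup_le le_sup_left (le_trans inf_le_right (le_trans inf_le_left le_rfl)))
        le_sup_right
    · exact sup_le_sup_right le_sup_left w
  have e2v : v ⊔ e2 ⊔ w = v ⊔ w := by
    apply le_antisymm
    · exact sup_le (sup_le le_sup_left (le_trans inf_le_right inf_le_right)) le_sup_right
    · exact sup_le_sup_right le_sup_left w
  rwa [e2u, e2v] at h3

lemma transferDown {u v w : L} (h : C.θQ u v) (hw : w ∈ C.P) : C.θP (u ⊓ w) (v ⊓ w) := by
  obtain ⟨hu, hv⟩ := C.hQ.1 u v h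
  have huwS : u ⊓ w ∈ C.P ∪ C.Q := C.hSm _ (C.hQS hu) _ (C.hPS hw)
  have hvwS : v ⊓ w ∈ C.P ∪ C.Q := C.hSm _ (C.hQS hv) _ (C.hPS hw)
  have huwP : u ⊓ w ∈ C.P := C.hPd _ huwS _ hw inf_le_right
  have hvwP : v ⊓ w ∈ C.P := C.hPd _ hvwS _ hw inf_le_right
  set e2 := C.e ⊔ ((u ⊓ w) ⊔ (v ⊓ w)) with he2
  have he2P : e2 ∈ C.P := C.hPj _ C.heP _ (C.hPj _ huwP _ hvwP)
  have he2Q : e2 ∈ C.Q := C.hQu _ (C.hPS he2P) _ C.heQ le_sup_left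
  have h1 : C.θQ (u ⊓ e2) (v ⊓ e2) := (C.hQ.2.2.2.2 u v e2 h he2Q).2
  have hue2Q : u ⊓ e2 ∈ C.Q := C.hQm _ hu _ he2Q
  have hve2Q : v ⊓ e2 ∈ C.Q := C.hQm _ hv _ he2Q
  have hue2P : u ⊓ e2 ∈ C.P := C.hPd _ (C.hQS hue2Q) _ he2P inf_le_right
  have hve2P : v ⊓ e2 ∈ C.P := C.hPd _ (C.hQS hve2Q) _ he2P inf_le_right
  have h2 : C.θP (u ⊓ e2) (v ⊓ e2) := (C.hAg _ _ hue2P hue2Q hve2P hve2Q).mpr h1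
  have h3 := (C.hP.2.2.2.2 _ _ w h2 hw).2
  have e2u : u ⊓ e2 ⊓ w = u ⊓ w := by
    apply le_antisymm
    · exact inf_le_inf_right w inf_le_left
    · exact le_inf (le_inf inf_le_left (le_trans le_sup_left le_sup_right)) inf_le_right
  have e2v : v ⊓ e2 ⊓ w = v ⊓ w := by
    apply le_antisymm
    · exact inf_le_inf_right w inf_le_left
    · exact le_inf (le_inf inf_le_left (le_trans le_sup_right le_sup_right)) inf_le_right
  rwa [e2u, e2v] at h3

/-- A `θQ`-pair joined with any element of `S` stays a `θQ`-pair. -/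
lemma joinQ {p q w : L} (h : C.θQ p q) (hw : w ∈ C.P ∪ C.Q) : C.θQ (p ⊔ w) (q ⊔ w) := by
  obtain ⟨hp, hq⟩ := C.hQ.1 _ _ h
  have hpwS : p ⊔ w ∈ C.P ∪ C.Q := C.hSj _ (C.hQS hp) _ hw
  have hqwS : q ⊔ w ∈ C.P ∪ C.Q := C.hSj _ (C.hQS hq) _ hw
  have hpwQ : p ⊔ w ∈ C.Q := C.hQu _ hpwS _ hp le_sup_left
  have hqwQ : q ⊔ w ∈ C.Q := C.hQu _ hqwS _ hq le_sup_left
  have hweS : w ⊔ C.e ∈ C.P ∪ C.Q := C.hSj _ hw _ (C.hPS C.heP)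
  have hweQ : w ⊔ C.e ∈ C.Q := C.hQu _ hweS _ C.heQ le_sup_right
  set w' := (w ⊔ C.e) ⊓ ((p ⊔ w) ⊓ (q ⊔ w)) with hw'
  have hw'Q : w' ∈ C.Q := C.hQm _ hweQ _ (C.hQm _ hpwQ _ hqwQ)
  have h1 := (C.hQ.2.2.2.2 _ _ w' h hw'Q).1
  have hww' : w ≤ w' := le_inf le_sup_left (le_inf le_sup_right le_sup_right)
  have e1 : p ⊔ w' = p ⊔ w := by
    apply le_antisymm
    · exact sup_le le_sup_left (le_trans inf_le_right inf_le_left)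
    · exact sup_le le_sup_left (le_trans hww' le_sup_right)
  have e2 : q ⊔ w' = q ⊔ w := by
    apply le_antisymm
    · exact sup_le le_sup_left (le_trans inf_le_right inf_le_right)
    · exact sup_le le_sup_left (le_trans hww' le_sup_right)
  rwa [e1, e2] at h1

/-- A `θP`-pair met with any element of `S` stays a `θP`-pair. -/
lemma meetP {p q w : L} (h : C.θP p q) (hw : w ∈ C.P ∪ C.Q) : C.θP (p ⊓ w) (q ⊓ w) := by
  obtain ⟨hp, hq⟩ := C.hP.1 _ _ h
  have hpwS : p ⊓ w ∈ C.P ∪ C.Q := C.hSm _ (C.hPS hp) _ hw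
  have hqwS : q ⊓ w ∈ C.P ∪ C.Q := C.hSm _ (C.hPS hq) _ hw
  have hpwP : p ⊓ w ∈ C.P := C.hPd _ hpwS _ hp inf_le_left
  have hqwP : q ⊓ w ∈ C.P := C.hPd _ hqwS _ hq inf_le_left
  have hweS : w ⊓ C.e ∈ C.P ∪ C.Q := C.hSm _ hw _ (C.hPS C.heP)
  have hweP : w ⊓ C.e ∈ C.P := C.hPd _ hweS _ C.heP inf_le_right
  set w' := (w ⊓ C.e) ⊔ ((p ⊓ w) ⊔ (q ⊓ w)) with hw'
  have hw'P : w' ∈ C.P := C.hPj _ hweP _ (C.hPj _ hpwP _ hqwP)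
  have h1 := (C.hP.2.2.2.2 _ _ w' h hw'P).2
  have hw'w : w' ≤ w := sup_le inf_le_left (sup_le inf_le_right inf_le_right)
  have e1 : p ⊓ w' = p ⊓ w := by
    apply le_antisymm
    · exact le_inf inf_le_left (le_trans inf_le_right hw'w)
    · exact le_inf inf_le_left (le_trans le_sup_left le_sup_right)
  have e2 : q ⊓ w' = q ⊓ w := by
    apply le_antisymm
    · exact le_inf inf_le_left (le_trans inf_le_right hw'w)
    · exact le_inf inf_le_left (le_trans le_sup_right le_sup_right)
  rwa [e1, e2] at h1


/-- The glued relation on ordered pairs. -/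
def sg (p q : L) : Prop :=
  p ≤ q ∧ ((p ∈ C.P ∧ q ∈ C.P ∧ C.θP p q) ∨ (p ∈ C.Q ∧ q ∈ C.Q ∧ C.θQ p q) ∨
    (p ∈ C.P ∧ q ∈ C.Q ∧ ∃ z, z ∈ C.P ∧ z ∈ C.Q ∧ p ≤ z ∧ z ≤ q ∧ C.θP p z ∧ C.θQ z q))

lemma sg_mem {p q : L} (h : C.sg p q) : p ∈ C.P ∪ C.Q ∧ q ∈ C.P ∪ C.Q := by
  rcases h.2 with ⟨h1, h2, _⟩ | ⟨h1, h2, _⟩ | ⟨h1, h2, _⟩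
  · exact ⟨C.hPS h1, C.hPS h2⟩
  · exact ⟨C.hQS h1, C.hQS h2⟩
  · exact ⟨C.hPS h1, C.hQS h2⟩

lemma sg_refl {p : L} (hp : p ∈ C.P ∪ C.Q) : C.sg p p := by
  rcases hp with hp | hp
  · exact ⟨le_rfl, Or.inl ⟨hp, hp, refl_of C.hP hp⟩⟩
  · exact ⟨le_rfl, Or.inr (Or.inl ⟨hp, hp, refl_of C.hQ hp⟩)⟩

lemma sg_restrP {p q : L} (h : C.sg p q) (hpP : p ∈ C.P) (hqP : q ∈ C.P) : C.θP p q := by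
  rcases h.2 with ⟨_, _, hθ⟩ | ⟨hpQ, hqQ, hθ⟩ | ⟨_, hqQ, z, hzP, hzQ, _, _, h1, h2⟩
  · exact hθ
  · exact (C.hAg _ _ hpP hpQ hqP hqQ).mpr hθ
  · exact trans_of C.hP h1 ((C.hAg _ _ hzP hzQ hqP hqQ).mpr h2)

lemma sg_restrQ {p q : L} (h : C.sg p q) (hpQ : p ∈ C.Q) (hqQ : q ∈ C.Q) : C.θQ p q := by
  rcases h.2 with ⟨hpP, hqP, hθ⟩ | ⟨_, _, hθ⟩ | ⟨hpP, _, z, hzP, hzQ, _, _, h1, h2⟩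
  · exact (C.hAg _ _ hpP hpQ hqP hqQ).mp hθ
  · exact hθ
  · exact trans_of C.hQ ((C.hAg _ _ hpP hpQ hzP hzQ).mp h1) h2

lemma sg_interp {p q : L} (h : C.sg p q) (hpP : p ∈ C.P) (hqQ : q ∈ C.Q) :
    ∃ z, z ∈ C.P ∧ z ∈ C.Q ∧ p ≤ z ∧ z ≤ q ∧ C.θP p z ∧ C.θQ z q := by
  obtain ⟨hle, hd⟩ := h
  have hpeP : p ⊔ C.e ∈ C.P := C.hPj _ hpP _ C.heP
  have hpeQ : p ⊔ C.e ∈ C.Q := C.hQu _ (C.hPS hpeP) _ C.heQ le_sup_right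
  rcases hd with ⟨_, hqP, hθ⟩ | ⟨hpQ, _, hθ⟩ | h3
  · set z := (p ⊔ C.e) ⊓ q with hz
    have hzP : z ∈ C.P := C.hPm _ hpeP _ hqP
    have hzQ : z ∈ C.Q := C.hQm _ hpeQ _ hqQ
    have hpz : p ≤ z := le_inf le_sup_left hle
    have hs := sandwich C.hP hθ hpz inf_le_right hzP
    exact ⟨z, hzP, hzQ, hpz, inf_le_right, hs.1, (C.hAg _ _ hzP hzQ hqP hqQ).mp hs.2⟩
  · set z := (p ⊔ C.e) ⊓ q with hz
    have hzQ : z ∈ C.Q := C.hQm _ hpeQ _ hqQ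
    have hzP : z ∈ C.P := C.hPd _ (C.hQS hzQ) _ hpeP inf_le_left
    have hpz : p ≤ z := le_inf le_sup_left hle
    have hs := sandwich C.hQ hθ hpz inf_le_right hzQ
    exact ⟨z, hzP, hzQ, hpz, inf_le_right, (C.hAg _ _ hpP hpQ hzP hzQ).mpr hs.1, hs.2⟩
  · exact h3.2.2

lemma sg_trans {p q r : L} (h1 : C.sg p q) (h2 : C.sg q r) : C.sg p r := by
  have hpq := h1.1
  have hqr := h2.1
  have hpS := (C.sg_mem h1).1
  have hqS := (C.sg_mem h1).2
  have hrS := (C.sg_mem h2).2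
  by_cases hpQ : p ∈ C.Q
  · have hqQ : q ∈ C.Q := C.hQu _ hqS _ hpQ hpq
    have hrQ : r ∈ C.Q := C.hQu _ hrS _ hqQ hqr
    exact ⟨hpq.trans hqr, Or.inr (Or.inl ⟨hpQ, hrQ,
      trans_of C.hQ (C.sg_restrQ h1 hpQ hqQ) (C.sg_restrQ h2 hqQ hrQ)⟩)⟩
  by_cases hrP : r ∈ C.P
  · have hqP : q ∈ C.P := C.hPd _ hqS _ hrP hqr
    have hpP : p ∈ C.P := C.hPd _ hpS _ hqP hpq
    exact ⟨hpq.trans hqr, Or.inl ⟨hpP, hrP,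
      trans_of C.hP (C.sg_restrP h1 hpP hqP) (C.sg_restrP h2 hqP hrP)⟩⟩
  have hpP : p ∈ C.P := hpS.resolve_right hpQ
  have hrQ : r ∈ C.Q := hrS.resolve_left hrP
  rcases hqS with hqP | hqQ
  · obtain ⟨z, hzP, hzQ, hqz, hzr, hb1, hb2⟩ := C.sg_interp h2 hqP hrQ
    exact ⟨hpq.trans hqr, Or.inr (Or.inr ⟨hpP, hrQ, z, hzP, hzQ, hpq.trans hqz, hzr,
      trans_of C.hP (C.sg_restrP h1 hpP hqP) hb1, hb2⟩)⟩
  · obtain ⟨z, hzP, hzQ, hpz, hzq, hb1, hb2⟩ := C.sg_interp h1 hpP hqQ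
    exact ⟨hpq.trans hqr, Or.inr (Or.inr ⟨hpP, hrQ, z, hzP, hzQ, hpz, hzq.trans hqr,
      hb1, trans_of C.hQ hb2 (C.sg_restrQ h2 hqQ hrQ)⟩)⟩

lemma sg_sand {p r m : L} (h : C.sg p r) (hpm : p ≤ m) (hmr : m ≤ r)
    (hm : m ∈ C.P ∪ C.Q) : C.sg p m ∧ C.sg m r := by
  obtain ⟨hpr, hd⟩ := h
  rcases hd with ⟨hpP, hrP, hθ⟩ | ⟨hpQ, hrQ, hθ⟩ | ⟨hpP, hrQ, z, hzP, hzQ, hpz, hzr, h1, h2⟩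
  · have hmP : m ∈ C.P := C.hPd _ hm _ hrP hmr
    have hs := sandwich C.hP hθ hpm hmr hmP
    exact ⟨⟨hpm, Or.inl ⟨hpP, hmP, hs.1⟩⟩, ⟨hmr, Or.inl ⟨hmP, hrP, hs.2⟩⟩⟩
  · have hmQ : m ∈ C.Q := C.hQu _ hm _ hpQ hpm
    have hs := sandwich C.hQ hθ hpm hmr hmQ
    exact ⟨⟨hpm, Or.inr (Or.inl ⟨hpQ, hmQ, hs.1⟩)⟩, ⟨hmr, Or.inr (Or.inl ⟨hmQ, hrQ, hs.2⟩)⟩⟩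
  · rcases hm with hmP | hmQ
    · have ha : C.θP p (z ⊓ m) := by
        have := (C.hP.2.2.2.2 _ _ m h1 hmP).2
        rwa [inf_eq_left.mpr hpm] at this
      have hb : C.θP (z ⊓ m) m := by
        have := C.transferDown h2 hmP
        rwa [inf_eq_right.mpr hmr] at this
      have sgpm : C.sg p m := ⟨hpm, Or.inl ⟨hpP, hmP, trans_of C.hP ha hb⟩⟩
      have hzmP : z ⊔ m ∈ C.P := C.hPj _ hzP _ hmP
      have hzmQ : z ⊔ m ∈ C.Q := C.hQu _ (C.hPS hzmP) _ hzQ le_sup_left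
      have hc : C.θP m (z ⊔ m) := by
        have := (C.hP.2.2.2.2 _ _ m h1 hmP).1
        rwa [sup_eq_right.mpr hpm] at this
      have hd2 : C.θQ (z ⊔ m) r := (sandwich C.hQ h2 le_sup_left (sup_le hzr hmr) hzmQ).2
      exact ⟨sgpm, ⟨hmr, Or.inr (Or.inr ⟨hmP, hrQ, z ⊔ m, hzmP, hzmQ, le_sup_right,
        sup_le hzr hmr, hc, hd2⟩)⟩⟩
    · have h4 : C.θQ m (z ⊔ m) := by
        have := C.transferUp h1 hmQ
        rwa [sup_eq_right.mpr hpm] at this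
      have hzmS : z ⊔ m ∈ C.P ∪ C.Q := C.hSj _ (C.hPS hzP) _ (C.hQS hmQ)
      have hzmQ : z ⊔ m ∈ C.Q := C.hQu _ hzmS _ hmQ le_sup_right
      have h5 : C.θQ (z ⊔ m) r := (sandwich C.hQ h2 le_sup_left (sup_le hzr hmr) hzmQ).2
      have sgmr : C.sg m r := ⟨hmr, Or.inr (Or.inl ⟨hmQ, hrQ, trans_of C.hQ h4 h5⟩)⟩
      have hzmQ2 : z ⊓ m ∈ C.Q := C.hQm _ hzQ _ hmQ
      have hzmP2 : z ⊓ m ∈ C.P := C.hPd _ (C.hQS hzmQ2) _ hzP inf_le_left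
      have h6 : C.θP p (z ⊓ m) := (sandwich C.hP h1 (le_inf hpz hpm) inf_le_left hzmP2).1
      have h7 : C.θQ (z ⊓ m) z := by
        have := (C.hQ.2.2.2.2 _ _ z h4 hzQ).2
        rw [inf_comm m z, inf_eq_right.mpr (le_sup_left : z ≤ z ⊔ m)] at this
        exact this
      have h8 : C.θQ z (z ⊔ m) := (sandwich C.hQ h2 le_sup_left (sup_le hzr hmr) hzmQ).1
      have h9 : C.θQ (z ⊓ m) m := trans_of C.hQ (trans_of C.hQ h7 h8) (symm_of C.hQ h4)
      exact ⟨⟨hpm, Or.inr (Or.inr ⟨hpP, hmQ, z ⊓ m, hzmP2, hzmQ2, le_inf hpz hpm,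
        inf_le_right, h6, h9⟩)⟩, sgmr⟩

lemma sg_join {p q w : L} (h : C.sg p q) (hw : w ∈ C.P ∪ C.Q) : C.sg (p ⊔ w) (q ⊔ w) := by
  obtain ⟨hpq, hd⟩ := h
  have hle : p ⊔ w ≤ q ⊔ w := sup_le_sup_right hpq w
  rcases hd with ⟨hpP, hqP, hθ⟩ | ⟨hpQ, hqQ, hθ⟩ | ⟨hpP, hqQ, z, hzP, hzQ, hpz, hzq, h1, h2⟩
  · rcases hw with hwP | hwQ
    · exact ⟨hle, Or.inl ⟨C.hPj _ hpP _ hwP, C.hPj _ hqP _ hwP,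
        (C.hP.2.2.2.2 _ _ w hθ hwP).1⟩⟩
    · have hpwQ : p ⊔ w ∈ C.Q :=
        C.hQu _ (C.hSj _ (C.hPS hpP) _ (C.hQS hwQ)) _ hwQ le_sup_right
      have hqwQ : q ⊔ w ∈ C.Q :=
        C.hQu _ (C.hSj _ (C.hPS hqP) _ (C.hQS hwQ)) _ hwQ le_sup_right
      exact ⟨hle, Or.inr (Or.inl ⟨hpwQ, hqwQ, C.transferUp hθ hwQ⟩)⟩
  · have hpwQ : p ⊔ w ∈ C.Q := C.hQu _ (C.hSj _ (C.hQS hpQ) _ hw) _ hpQ le_sup_left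
    have hqwQ : q ⊔ w ∈ C.Q := C.hQu _ (C.hSj _ (C.hQS hqQ) _ hw) _ hqQ le_sup_left
    exact ⟨hle, Or.inr (Or.inl ⟨hpwQ, hqwQ, C.joinQ hθ hw⟩)⟩
  · rcases hw with hwP | hwQ
    · have hpwP : p ⊔ w ∈ C.P := C.hPj _ hpP _ hwP
      have hzwP : z ⊔ w ∈ C.P := C.hPj _ hzP _ hwP
      have hzwQ : z ⊔ w ∈ C.Q := C.hQu _ (C.hPS hzwP) _ hzQ le_sup_left
      have hqwQ : q ⊔ w ∈ C.Q :=
        C.hQu _ (C.hSj _ (C.hQS hqQ) _ (C.hPS hwP)) _ hqQ le_sup_left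
      exact ⟨hle, Or.inr (Or.inr ⟨hpwP, hqwQ, z ⊔ w, hzwP, hzwQ,
        sup_le_sup_right hpz w, sup_le_sup_right hzq w,
        (C.hP.2.2.2.2 _ _ w h1 hwP).1, C.joinQ h2 (C.hPS hwP)⟩)⟩
    · have hpwQ : p ⊔ w ∈ C.Q :=
        C.hQu _ (C.hSj _ (C.hPS hpP) _ (C.hQS hwQ)) _ hwQ le_sup_right
      have hqwQ : q ⊔ w ∈ C.Q :=
        C.hQu _ (C.hSj _ (C.hQS hqQ) _ (C.hQS hwQ)) _ hqQ le_sup_left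
      exact ⟨hle, Or.inr (Or.inl ⟨hpwQ, hqwQ,
        trans_of C.hQ (C.transferUp h1 hwQ) ((C.hQ.2.2.2.2 _ _ w h2 hwQ).1)⟩)⟩

lemma sg_meet {p q w : L} (h : C.sg p q) (hw : w ∈ C.P ∪ C.Q) : C.sg (p ⊓ w) (q ⊓ w) := by
  obtain ⟨hpq, hd⟩ := h
  have hle : p ⊓ w ≤ q ⊓ w := inf_le_inf_right w hpq
  rcases hd with ⟨hpP, hqP, hθ⟩ | ⟨hpQ, hqQ, hθ⟩ | ⟨hpP, hqQ, z, hzP, hzQ, hpz, hzq, h1, h2⟩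
  · have hpwP : p ⊓ w ∈ C.P := C.hPd _ (C.hSm _ (C.hPS hpP) _ hw) _ hpP inf_le_left
    have hqwP : q ⊓ w ∈ C.P := C.hPd _ (C.hSm _ (C.hPS hqP) _ hw) _ hqP inf_le_left
    exact ⟨hle, Or.inl ⟨hpwP, hqwP, C.meetP hθ hw⟩⟩
  · rcases hw with hwP | hwQ
    · have hpwP : p ⊓ w ∈ C.P :=
        C.hPd _ (C.hSm _ (C.hQS hpQ) _ (C.hPS hwP)) _ hwP inf_le_right
      have hqwP : q ⊓ w ∈ C.P :=
        C.hPd _ (C.hSm _ (C.hQS hqQ) _ (C.hPS hwP)) _ hwP inf_le_right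
      exact ⟨hle, Or.inl ⟨hpwP, hqwP, C.transferDown hθ hwP⟩⟩
    · exact ⟨hle, Or.inr (Or.inl ⟨C.hQm _ hpQ _ hwQ, C.hQm _ hqQ _ hwQ,
        (C.hQ.2.2.2.2 _ _ w hθ hwQ).2⟩)⟩
  · rcases hw with hwP | hwQ
    · have hpwP : p ⊓ w ∈ C.P :=
        C.hPd _ (C.hSm _ (C.hPS hpP) _ (C.hPS hwP)) _ hwP inf_le_right
      have hqwP : q ⊓ w ∈ C.P :=
        C.hPd _ (C.hSm _ (C.hQS hqQ) _ (C.hPS hwP)) _ hwP inf_le_right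
      exact ⟨hle, Or.inl ⟨hpwP, hqwP,
        trans_of C.hP (C.meetP h1 (C.hPS hwP)) (C.transferDown h2 hwP)⟩⟩
    · have hpwP : p ⊓ w ∈ C.P :=
        C.hPd _ (C.hSm _ (C.hPS hpP) _ (C.hQS hwQ)) _ hpP inf_le_left
      have hzwQ : z ⊓ w ∈ C.Q := C.hQm _ hzQ _ hwQ
      have hzwP : z ⊓ w ∈ C.P := C.hPd _ (C.hQS hzwQ) _ hzP inf_le_left
      have hqwQ : q ⊓ w ∈ C.Q := C.hQm _ hqQ _ hwQ
      exact ⟨hle, Or.inr (Or.inr ⟨hpwP, hqwQ, z ⊓ w, hzwP, hzwQ,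
        inf_le_inf_right w hpz, inf_le_inf_right w hzq,
        C.meetP h1 (C.hQS hwQ), (C.hQ.2.2.2.2 _ _ w h2 hwQ).2⟩)⟩

/-- The glued congruence. -/
def rel (x y : L) : Prop := C.sg (x ⊓ y) (x ⊔ y)

lemma rel_mem {x y : L} (h : C.rel x y) : x ∈ C.P ∪ C.Q ∧ y ∈ C.P ∪ C.Q := by
  obtain ⟨h1, h2⟩ := C.sg_mem h
  exact ⟨C.hSconv _ h1 _ h2 x inf_le_left le_sup_left,
    C.hSconv _ h1 _ h2 y inf_le_right le_sup_right⟩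

lemma rel_refl {x : L} (hx : x ∈ C.P ∪ C.Q) : C.rel x x := by
  show C.sg (x ⊓ x) (x ⊔ x)
  rw [inf_idem, sup_idem]
  exact C.sg_refl hx

lemma rel_symm {x y : L} (h : C.rel x y) : C.rel y x := by
  show C.sg (y ⊓ x) (y ⊔ x)
  rw [inf_comm y x, sup_comm y x]
  exact h

lemma rel_trans {x y z : L} (hxy : C.rel x y) (hyz : C.rel y z) : C.rel x z := by
  have hx := (C.rel_mem hxy).1
  have hy := (C.rel_mem hxy).2
  have hz := (C.rel_mem hyz).2
  have s1 := C.sg_join hxy (C.hSm _ hy _ hz)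
  have s2 := C.sg_join hyz (C.hSj _ hx _ hy)
  rw [show (x ⊔ y) ⊔ (y ⊓ z) = (y ⊓ z) ⊔ (x ⊔ y) from sup_comm _ _] at s1
  rw [show (y ⊔ z) ⊔ (x ⊔ y) = (x ⊔ y) ⊔ z from by
    simp [sup_assoc, sup_comm, sup_left_comm]] at s2
  have t1 := C.sg_trans s1 s2
  have s3 := C.sg_meet hxy (C.hSj _ hy _ hz)
  have s4 := C.sg_meet hyz (C.hSm _ hx _ hy)
  rw [show (y ⊓ z) ⊓ (x ⊓ y) = (x ⊓ y) ⊓ (y ⊓ z) from inf_comm _ _,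
    show (y ⊔ z) ⊓ (x ⊓ y) = (x ⊓ y) ⊓ (y ⊔ z) from inf_comm _ _] at s4
  have t2 := C.sg_trans s4 s3
  have hmS : (x ⊓ y) ⊔ (y ⊓ z) ∈ C.P ∪ C.Q := C.hSj _ (C.hSm _ hx _ hy) _ (C.hSm _ hy _ hz)
  have l1 : (x ⊓ y) ⊓ (y ⊓ z) ≤ (x ⊓ y) ⊔ (y ⊓ z) := le_trans inf_le_left le_sup_left
  have l2 : (x ⊓ y) ⊔ (y ⊓ z) ≤ (x ⊔ y) ⊓ (y ⊔ z) :=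
    sup_le (le_inf (le_trans inf_le_left le_sup_left) (le_trans inf_le_right le_sup_left))
      (le_inf (le_trans inf_le_left le_sup_right) (le_trans inf_le_left le_sup_left))
  have u1 := (C.sg_sand t2 l1 l2 hmS).1
  have u2 := C.sg_trans u1 t1
  have hxzS : x ⊓ z ∈ C.P ∪ C.Q := C.hSm _ hx _ hz
  have b1 : (x ⊓ y) ⊓ (y ⊓ z) ≤ x ⊓ z :=
    le_inf (le_trans inf_le_left inf_le_left) (le_trans inf_le_right inf_le_right)
  have b2 : x ⊓ z ≤ (x ⊔ y) ⊔ z := le_trans inf_le_left (le_trans le_sup_left le_sup_left)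
  have v1 := (C.sg_sand u2 b1 b2 hxzS).2
  have b3 : x ⊓ z ≤ x ⊔ z := le_trans inf_le_left le_sup_left
  have b4 : x ⊔ z ≤ (x ⊔ y) ⊔ z := sup_le (le_trans le_sup_left le_sup_left) le_sup_right
  exact (C.sg_sand v1 b3 b4 (C.hSj _ hx _ hz)).1

lemma rel_sub {x y z : L} (h : C.rel x y) (hz : z ∈ C.P ∪ C.Q) :
    C.rel (x ⊔ z) (y ⊔ z) ∧ C.rel (x ⊓ z) (y ⊓ z) := by
  have hx := (C.rel_mem h).1
  have hy := (C.rel_mem h).2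
  constructor
  · have j1 := C.sg_join h hz
    have hmS : (x ⊔ z) ⊓ (y ⊔ z) ∈ C.P ∪ C.Q :=
      C.hSm _ (C.hSj _ hx _ hz) _ (C.hSj _ hy _ hz)
    have l1 : (x ⊓ y) ⊔ z ≤ (x ⊔ z) ⊓ (y ⊔ z) :=
      sup_le (le_inf (le_trans inf_le_left le_sup_left) (le_trans inf_le_right le_sup_left))
        (le_inf le_sup_right le_sup_right)
    have l2 : (x ⊔ z) ⊓ (y ⊔ z) ≤ (x ⊔ y) ⊔ z :=
      le_trans inf_le_left (sup_le (le_trans le_sup_left le_sup_left) le_sup_right)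
    have j2 := (C.sg_sand j1 l1 l2 hmS).2
    show C.sg ((x ⊔ z) ⊓ (y ⊔ z)) ((x ⊔ z) ⊔ (y ⊔ z))
    rw [show (x ⊔ z) ⊔ (y ⊔ z) = (x ⊔ y) ⊔ z from by
      simp [sup_assoc, sup_comm, sup_left_comm]]
    exact j2
  · have j1 := C.sg_meet h hz
    have hmS : (x ⊓ z) ⊔ (y ⊓ z) ∈ C.P ∪ C.Q :=
      C.hSj _ (C.hSm _ hx _ hz) _ (C.hSm _ hy _ hz)
    have l1 : (x ⊓ y) ⊓ z ≤ (x ⊓ z) ⊔ (y ⊓ z) :=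
      le_trans (le_inf (le_trans inf_le_left inf_le_left) inf_le_right) le_sup_left
    have l2 : (x ⊓ z) ⊔ (y ⊓ z) ≤ (x ⊔ y) ⊓ z :=
      sup_le (le_inf (le_trans inf_le_left le_sup_left) inf_le_right)
        (le_inf (le_trans inf_le_left le_sup_right) inf_le_right)
    have j2 := (C.sg_sand j1 l1 l2 hmS).1
    show C.sg ((x ⊓ z) ⊓ (y ⊓ z)) ((x ⊓ z) ⊔ (y ⊓ z))
    rw [show (x ⊓ z) ⊓ (y ⊓ z) = (x ⊓ y) ⊓ z from by
      simp [inf_assoc, inf_comm, inf_left_comm]]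
    exact j2

lemma rel_isConOn : IsConOn (C.P ∪ C.Q) C.rel :=
  ⟨fun x y h => C.rel_mem h, fun x hx => C.rel_refl hx, fun x y h => C.rel_symm h,
    fun x y z h1 h2 => C.rel_trans h1 h2, fun x y z h hz => C.rel_sub h hz⟩

lemma rel_restrP : restr C.P C.rel = C.θP := by
  funext x y
  apply propext
  constructor
  · rintro ⟨h, hx, hy⟩
    exact of_mj C.hP hx hy (C.sg_restrP h (C.hPm _ hx _ hy) (C.hPj _ hx _ hy))
  · intro h
    obtain ⟨hx, hy⟩ := C.hP.1 _ _ h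
    exact ⟨⟨inf_le_sup, Or.inl ⟨C.hPm _ hx _ hy, C.hPj _ hx _ hy, mj C.hP h⟩⟩, hx, hy⟩

lemma rel_restrQ : restr C.Q C.rel = C.θQ := by
  funext x y
  apply propext
  constructor
  · rintro ⟨h, hx, hy⟩
    exact of_mj C.hQ hx hy (C.sg_restrQ h (C.hQm _ hx _ hy) (C.hQj _ hx _ hy))
  · intro h
    obtain ⟨hx, hy⟩ := C.hQ.1 _ _ h
    exact ⟨⟨inf_le_sup, Or.inr (Or.inl ⟨C.hQm _ hx _ hy, C.hQj _ hx _ hy, mj C.hQ h⟩)⟩, hx, hy⟩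

lemma rel_unique (θ' : L → L → Prop) (h' : IsConOn (C.P ∪ C.Q) θ')
    (hp' : restr C.P θ' = C.θP) (hq' : restr C.Q θ' = C.θQ) : θ' = C.rel := by
  funext x y
  apply propext
  constructor
  · intro h
    obtain ⟨hx, hy⟩ := h'.1 x y h
    have hpq : θ' (x ⊓ y) (x ⊔ y) := mj h' h
    have hpS : x ⊓ y ∈ C.P ∪ C.Q := C.hSm _ hx _ hy
    have hqS : x ⊔ y ∈ C.P ∪ C.Q := C.hSj _ hx _ hy
    refine ⟨inf_le_sup, ?_⟩
    by_cases hqP : x ⊔ y ∈ C.P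
    · have hpP : x ⊓ y ∈ C.P := C.hPd _ hpS _ hqP inf_le_sup
      exact Or.inl ⟨hpP, hqP, (restr_iff hp' hpP hqP).mp hpq⟩
    by_cases hpQ : x ⊓ y ∈ C.Q
    · have hqQ : x ⊔ y ∈ C.Q := C.hQu _ hqS _ hpQ inf_le_sup
      exact Or.inr (Or.inl ⟨hpQ, hqQ, (restr_iff hq' hpQ hqQ).mp hpq⟩)
    have hpP : x ⊓ y ∈ C.P := hpS.resolve_right hpQ
    have hqQ : x ⊔ y ∈ C.Q := hqS.resolve_left hqP
    have hpeP : (x ⊓ y) ⊔ C.e ∈ C.P := C.hPj _ hpP _ C.heP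
    have hpeQ : (x ⊓ y) ⊔ C.e ∈ C.Q := C.hQu _ (C.hPS hpeP) _ C.heQ le_sup_right
    set z := ((x ⊓ y) ⊔ C.e) ⊓ (x ⊔ y) with hz
    have hzQ : z ∈ C.Q := C.hQm _ hpeQ _ hqQ
    have hzP : z ∈ C.P := C.hPd _ (C.hQS hzQ) _ hpeP inf_le_left
    have hpz : x ⊓ y ≤ z := le_inf le_sup_left inf_le_sup
    have hs := sandwich h' hpq hpz inf_le_right (C.hQS hzQ)
    exact Or.inr (Or.inr ⟨hpP, hqQ, z, hzP, hzQ, hpz, inf_le_right,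
      (restr_iff hp' hpP hzP).mp hs.1, (restr_iff hq' hzQ hqQ).mp hs.2⟩)
  · intro h
    have hpS := (C.sg_mem h).1
    have hqS := (C.sg_mem h).2
    obtain ⟨hle, hd⟩ := h
    have hx : x ∈ C.P ∪ C.Q := C.hSconv _ hpS _ hqS x inf_le_left le_sup_left
    have hy : y ∈ C.P ∪ C.Q := C.hSconv _ hpS _ hqS y inf_le_right le_sup_right
    have hθ' : θ' (x ⊓ y) (x ⊔ y) := by
      rcases hd with ⟨hpP, hqP, hθ⟩ | ⟨hpQ, hqQ, hθ⟩ | ⟨hpP, hqQ, z, hzP, hzQ, hpz, hzq, h1, h2⟩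
      · exact (restr_iff hp' hpP hqP).mpr hθ
      · exact (restr_iff hq' hpQ hqQ).mpr hθ
      · exact trans_of h' ((restr_iff hp' hpP hzP).mpr h1) ((restr_iff hq' hzQ hqQ).mpr h2)
    have a1 := (sandwich h' hθ' inf_le_left le_sup_left hx).1
    have a2 := (sandwich h' hθ' inf_le_right le_sup_right hy).1
    exact trans_of h' (symm_of h' a1) a2

theorem glue : ∃! θ : L → L → Prop,
    IsConOn (C.P ∪ C.Q) θ ∧ restr C.P θ = C.θP ∧ restr C.Q θ = C.θQ :=
  ⟨C.rel, ⟨C.rel_isConOn, C.rel_restrP, C.rel_restrQ⟩,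
    fun θ' h => C.rel_unique θ' h.1 h.2.1 h.2.2⟩

end GlueCtx

end TG

open TG in
/-- in a triple gluing of `U`, `V`, `X = ↓c`, `Y = ↑c`, pairwise
compatible congruences on the four pieces have a unique common extension to a
congruence of `L`. -/
theorem triple_gluing_congruence_extension
    {L : Type*} [Lattice L] (U V : Set L) (c : L)
    -- U and V are convex sublattices
    (hUsub : ∀ x ∈ U, ∀ y ∈ U, x ⊔ y ∈ U ∧ x ⊓ y ∈ U)
    (hUconv : ∀ a ∈ U, ∀ b ∈ U, ∀ x : L, a ≤ x → x ≤ b → x ∈ U)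
    (hVsub : ∀ x ∈ V, ∀ y ∈ V, x ⊔ y ∈ V ∧ x ⊓ y ∈ V)
    (hVconv : ∀ a ∈ V, ∀ b ∈ V, ∀ x : L, a ≤ x → x ≤ b → x ∈ V)
    -- L is the union of U, V, X = ↓c, Y = ↑c
    (hcover : U ∪ V ∪ Set.Iic c ∪ Set.Ici c = Set.univ)
    -- (Pi): A = U ∪ X is an ideal of L
    (hAdown : ∀ x ∈ U ∪ Set.Iic c, ∀ y : L, y ≤ x → y ∈ U ∪ Set.Iic c)
    (hAsup : ∀ x ∈ U ∪ Set.Iic c, ∀ y ∈ U ∪ Set.Iic c, x ⊔ y ∈ U ∪ Set.Iic c)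
    -- (Pii): B = V ∪ Y is a filter of L
    (hBup : ∀ x ∈ V ∪ Set.Ici c, ∀ y : L, x ≤ y → y ∈ V ∪ Set.Ici c)
    (hBinf : ∀ x ∈ V ∪ Set.Ici c, ∀ y ∈ V ∪ Set.Ici c, x ⊓ y ∈ V ∪ Set.Ici c)
    -- (Piii): U is a filter of A (X = ↓c is automatically an ideal of A)
    (hUfilter : ∀ a ∈ U ∪ Set.Iic c, ∀ u ∈ U, u ≤ a → a ∈ U)
    -- (Piv): V is an ideal of B (Y = ↑c is automatically a filter of B)
    (hVideal : ∀ b ∈ V ∪ Set.Ici c, ∀ v ∈ V, b ≤ v → b ∈ V)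
    -- (Pv)
    (hPv : U ∩ V = {c})
    (αX αY αU αV : L → L → Prop)
    (hαX : IsConOn (Set.Iic c) αX) (hαY : IsConOn (Set.Ici c) αY)
    (hαU : IsConOn U αU) (hαV : IsConOn V αV)
    (hUX : restr (U ∩ Set.Iic c) αX = restr (U ∩ Set.Iic c) αU)
    (hVX : restr (V ∩ Set.Iic c) αX = restr (V ∩ Set.Iic c) αV)
    (hVY : restr (V ∩ Set.Ici c) αY = restr (V ∩ Set.Ici c) αV)
    (hUY : restr (U ∩ Set.Ici c) αY = restr (U ∩ Set.Ici c) αU) :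
    ∃! α : L → L → Prop, IsConOn Set.univ α ∧
      restr (Set.Iic c) α = αX ∧ restr (Set.Ici c) α = αY ∧
      restr U α = αU ∧ restr V α = αV := by
  -- basic membership facts
  have hcUV : c ∈ U ∩ V := by
    have : c ∈ ({c} : Set L) := rfl
    rwa [← hPv] at this
  have hcU : c ∈ U := hcUV.1
  have hcV : c ∈ V := hcUV.2
  have swap1 : ∀ x : L, x ∈ Set.Iic c ∪ U ↔ x ∈ U ∪ Set.Iic c := fun x => by
    rw [Set.union_comm]
  have covered : ∀ x : L, x ∈ (Set.Iic c ∪ U) ∪ (V ∪ Set.Ici c) := by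
    intro x
    have hx := (Set.eq_univ_iff_forall.mp hcover) x
    simp only [Set.mem_union] at hx ⊢
    tauto
  -- compatibility in iff form
  have compatUX : ∀ x y : L, x ∈ U → x ≤ c → y ∈ U → y ≤ c → (αX x y ↔ αU x y) := by
    intro x y hx1 hx2 hy1 hy2
    have h := congrFun (congrFun hUX x) y
    constructor
    · intro hh
      exact ((Eq.mp (congrArg id h) ⟨hh, ⟨hx1, hx2⟩, ⟨hy1, hy2⟩⟩ : restr _ αU x y)).1
    · intro hh
      exact ((Eq.mpr (congrArg id h) ⟨hh, ⟨hx1, hx2⟩, ⟨hy1, hy2⟩⟩ : restr _ αX x y)).1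
  have compatVX : ∀ x y : L, x ∈ V → x ≤ c → y ∈ V → y ≤ c → (αX x y ↔ αV x y) := by
    intro x y hx1 hx2 hy1 hy2
    have h := congrFun (congrFun hVX x) y
    constructor
    · intro hh
      exact ((Eq.mp (congrArg id h) ⟨hh, ⟨hx1, hx2⟩, ⟨hy1, hy2⟩⟩ : restr _ αV x y)).1
    · intro hh
      exact ((Eq.mpr (congrArg id h) ⟨hh, ⟨hx1, hx2⟩, ⟨hy1, hy2⟩⟩ : restr _ αX x y)).1
  have compatVY : ∀ x y : L, x ∈ V → c ≤ x → y ∈ V → c ≤ y → (αY x y ↔ αV x y) := by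
    intro x y hx1 hx2 hy1 hy2
    have h := congrFun (congrFun hVY x) y
    constructor
    · intro hh
      exact ((Eq.mp (congrArg id h) ⟨hh, ⟨hx1, hx2⟩, ⟨hy1, hy2⟩⟩ : restr _ αV x y)).1
    · intro hh
      exact ((Eq.mpr (congrArg id h) ⟨hh, ⟨hx1, hx2⟩, ⟨hy1, hy2⟩⟩ : restr _ αY x y)).1
  have compatUY : ∀ x y : L, x ∈ U → c ≤ x → y ∈ U → c ≤ y → (αY x y ↔ αU x y) := by
    intro x y hx1 hx2 hy1 hy2
    have h := congrFun (congrFun hUY x) y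
    constructor
    · intro hh
      exact ((Eq.mp (congrArg id h) ⟨hh, ⟨hx1, hx2⟩, ⟨hy1, hy2⟩⟩ : restr _ αU x y)).1
    · intro hh
      exact ((Eq.mpr (congrArg id h) ⟨hh, ⟨hx1, hx2⟩, ⟨hy1, hy2⟩⟩ : restr _ αY x y)).1
  -- closures of A = Iic c ∪ U
  have S1j : ∀ x ∈ Set.Iic c ∪ U, ∀ y ∈ Set.Iic c ∪ U, x ⊔ y ∈ Set.Iic c ∪ U :=
    fun x hx y hy => (swap1 _).mpr (hAsup x ((swap1 x).mp hx) y ((swap1 y).mp hy))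
  have S1m : ∀ x ∈ Set.Iic c ∪ U, ∀ y ∈ Set.Iic c ∪ U, x ⊓ y ∈ Set.Iic c ∪ U :=
    fun x hx y _ => (swap1 _).mpr (hAdown x ((swap1 x).mp hx) (x ⊓ y) inf_le_left)
  have S1conv : ∀ a ∈ Set.Iic c ∪ U, ∀ b ∈ Set.Iic c ∪ U, ∀ x : L,
      a ≤ x → x ≤ b → x ∈ Set.Iic c ∪ U :=
    fun _ _ b hb x _ hxb => (swap1 _).mpr (hAdown b ((swap1 b).mp hb) x hxb)
  have S2j : ∀ x ∈ V ∪ Set.Ici c, ∀ y ∈ V ∪ Set.Ici c, x ⊔ y ∈ V ∪ Set.Ici c :=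
    fun x hx y _ => hBup x hx (x ⊔ y) le_sup_left
  have S2conv : ∀ a ∈ V ∪ Set.Ici c, ∀ b ∈ V ∪ Set.Ici c, ∀ x : L,
      a ≤ x → x ≤ b → x ∈ V ∪ Set.Ici c :=
    fun a ha _ _ x hax _ => hBup a ha x hax
  -- first gluing: along Iic c and U, giving congruence on A
  let C1 : GlueCtx L :=
    { P := Set.Iic c, Q := U, e := c,
      heP := Set.mem_Iic.mpr le_rfl, heQ := hcU,
      hPj := fun x hx y hy => Set.mem_Iic.mpr (sup_le (Set.mem_Iic.mp hx) (Set.mem_Iic.mp hy)),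
      hPm := fun x hx y _ => Set.mem_Iic.mpr (le_trans inf_le_left (Set.mem_Iic.mp hx)),
      hQj := fun x hx y hy => (hUsub x hx y hy).1,
      hQm := fun x hx y hy => (hUsub x hx y hy).2,
      hSj := S1j, hSm := S1m, hSconv := S1conv,
      hPd := fun s _ p hp hsp => Set.mem_Iic.mpr (le_trans hsp (Set.mem_Iic.mp hp)),
      hQu := fun s hs q hq hqs => hUfilter s ((swap1 s).mp hs) q hq hqs,
      θP := αX, θQ := αU, hP := hαX, hQ := hαU,
      hAg := fun x y hx1 hx2 hy1 hy2 =>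
        compatUX x y hx2 (Set.mem_Iic.mp hx1) hy2 (Set.mem_Iic.mp hy1) }
  obtain ⟨θA, ⟨hconA, hrXA, hrUA⟩, huniqA⟩ := C1.glue
  -- second gluing: along V and Ici c, giving congruence on B
  let C2 : GlueCtx L :=
    { P := V, Q := Set.Ici c, e := c,
      heP := hcV, heQ := Set.mem_Ici.mpr le_rfl,
      hPj := fun x hx y hy => (hVsub x hx y hy).1,
      hPm := fun x hx y hy => (hVsub x hx y hy).2,
      hQj := fun x hx y _ => Set.mem_Ici.mpr (le_trans (Set.mem_Ici.mp hx) le_sup_left),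
      hQm := fun x hx y hy => Set.mem_Ici.mpr (le_inf (Set.mem_Ici.mp hx) (Set.mem_Ici.mp hy)),
      hSj := S2j, hSm := hBinf, hSconv := S2conv,
      hPd := fun s hs p hp hsp => hVideal s hs p hp hsp,
      hQu := fun s _ q hq hqs => Set.mem_Ici.mpr (le_trans (Set.mem_Ici.mp hq) hqs),
      θP := αV, θQ := αY, hP := hαV, hQ := hαY,
      hAg := fun x y hx1 hx2 hy1 hy2 =>
        (compatVY x y hx1 (Set.mem_Ici.mp hx2) hy1 (Set.mem_Ici.mp hy2)).symm }
  obtain ⟨θB, ⟨hconB, hrVB, hrYB⟩, huniqB⟩ := C2.glue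
  -- the two glued congruences agree on A ∩ B
  have hcS1 : c ∈ Set.Iic c ∪ U := Or.inl (Set.mem_Iic.mpr le_rfl)
  have hcS2 : c ∈ V ∪ Set.Ici c := Or.inl hcV
  have core : ∀ p q : L, p ≤ q → p ∈ Set.Iic c ∪ U → p ∈ V ∪ Set.Ici c →
      q ∈ Set.Iic c ∪ U → q ∈ V ∪ Set.Ici c → (θA p q ↔ θB p q) := by
    intro p q hpq hpA hpB hqA hqB
    by_cases hqc : q ≤ c
    · have hpc : p ≤ c := hpq.trans hqc
      have hqV : q ∈ V := by
        rcases hqB with h | h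
        · exact h
        · exact (le_antisymm hqc (Set.mem_Ici.mp h)).symm ▸ hcV
      have hpV : p ∈ V := by
        rcases hpB with h | h
        · exact h
        · exact (le_antisymm hpc (Set.mem_Ici.mp h)).symm ▸ hcV
      exact (restr_iff hrXA (Set.mem_Iic.mpr hpc) (Set.mem_Iic.mpr hqc)).trans
        ((compatVX p q hpV hpc hqV hqc).trans (restr_iff hrVB hpV hqV).symm)
    by_cases hpc : c ≤ p
    · have hqc' : c ≤ q := hpc.trans hpq
      have hpU : p ∈ U := by
        rcases hpA with h | h
        · exact (le_antisymm (Set.mem_Iic.mp h) hpc).symm ▸ hcU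
        · exact h
      have hqU : q ∈ U := by
        rcases hqA with h | h
        · exact (le_antisymm (Set.mem_Iic.mp h) hqc').symm ▸ hcU
        · exact h
      exact (restr_iff hrUA hpU hqU).trans ((compatUY p q hpU hpc hqU hqc').symm.trans
        (restr_iff hrYB (Set.mem_Ici.mpr hpc) (Set.mem_Ici.mpr hqc')).symm)
    · -- p ≤ c ≤ q with p ∈ V ∩ Iic, q ∈ U ∩ Ici
      have hpVc : p ≤ c ∧ p ∈ V := by
        rcases hpA with h | h
        · refine ⟨Set.mem_Iic.mp h, ?_⟩
          rcases hpB with h' | h'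
          · exact h'
          · exact absurd (Set.mem_Ici.mp h') hpc
        · rcases hpB with h' | h'
          · have hmem : p ∈ U ∩ V := ⟨h, h'⟩
            rw [hPv] at hmem
            exact absurd (le_of_eq hmem.symm : c ≤ p) hpc
          · exact absurd (Set.mem_Ici.mp h') hpc
      have hqUc : c ≤ q ∧ q ∈ U := by
        rcases hqB with h | h
        · rcases hqA with h' | h'
          · exact absurd (Set.mem_Iic.mp h') hqc
          · have hmem : q ∈ U ∩ V := ⟨h', h⟩
            rw [hPv] at hmem
            exact absurd (le_of_eq hmem : q ≤ c) hqc
        · rcases hqA with h' | h'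
          · exact absurd (Set.mem_Iic.mp h') hqc
          · exact ⟨Set.mem_Ici.mp h, h'⟩
      obtain ⟨hpc2, hpV⟩ := hpVc
      obtain ⟨hqc2, hqU⟩ := hqUc
      have hA1 : θA p q ↔ (θA p c ∧ θA c q) := by
        constructor
        · intro h
          exact sandwich hconA h hpc2 hqc2 hcS1
        · rintro ⟨h1, h2⟩
          exact trans_of hconA h1 h2
      have hB1 : θB p q ↔ (θB p c ∧ θB c q) := by
        constructor
        · intro h
          exact sandwich hconB h hpc2 hqc2 hcS2
        · rintro ⟨h1, h2⟩
          exact trans_of hconB h1 h2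
      have e1 : θA p c ↔ θB p c :=
        (restr_iff hrXA (Set.mem_Iic.mpr hpc2) (Set.mem_Iic.mpr le_rfl)).trans
          ((compatVX p c hpV hpc2 hcV le_rfl).trans (restr_iff hrVB hpV hcV).symm)
      have e2 : θA c q ↔ θB c q :=
        (restr_iff hrUA hcU hqU).trans ((compatUY c q hcU le_rfl hqU hqc2).symm.trans
          (restr_iff hrYB (Set.mem_Ici.mpr le_rfl) (Set.mem_Ici.mpr hqc2)).symm)
      rw [hA1, hB1, e1, e2]
  have hbridge : ∀ x y : L, x ∈ Set.Iic c ∪ U → x ∈ V ∪ Set.Ici c →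
      y ∈ Set.Iic c ∪ U → y ∈ V ∪ Set.Ici c → (θA x y ↔ θB x y) := by
    intro x y hxA hxB hyA hyB
    have pA : x ⊓ y ∈ Set.Iic c ∪ U := S1m _ hxA _ hyA
    have qA : x ⊔ y ∈ Set.Iic c ∪ U := S1j _ hxA _ hyA
    have pB : x ⊓ y ∈ V ∪ Set.Ici c := hBinf _ hxB _ hyB
    have qB : x ⊔ y ∈ V ∪ Set.Ici c := S2j _ hxB _ hyB
    constructor
    · intro h
      exact of_mj hconB hxB hyB ((core _ _ inf_le_sup pA pB qA qB).mp (mj hconA h))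
    · intro h
      exact of_mj hconA hxA hyA ((core _ _ inf_le_sup pA pB qA qB).mpr (mj hconB h))
  -- third gluing: along A and B
  let C3 : GlueCtx L :=
    { P := Set.Iic c ∪ U, Q := V ∪ Set.Ici c, e := c,
      heP := hcS1, heQ := hcS2,
      hPj := S1j, hPm := S1m,
      hQj := S2j, hQm := hBinf,
      hSj := fun x _ y _ => covered _, hSm := fun x _ y _ => covered _,
      hSconv := fun _ _ _ _ x _ _ => covered x,
      hPd := fun s _ p hp hsp => (swap1 _).mpr (hAdown p ((swap1 p).mp hp) s hsp),
      hQu := fun s _ q hq hqs => hBup q hq s hqs,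
      θP := θA, θQ := θB, hP := hconA, hQ := hconB,
      hAg := hbridge }
  obtain ⟨θ, ⟨hconT, hrAT, hrBT⟩, huniqT⟩ := C3.glue
  have huniv : (Set.Iic c ∪ U) ∪ (V ∪ Set.Ici c) = Set.univ :=
    Set.eq_univ_of_forall covered
  have hsub1 : Set.Iic c ⊆ Set.Iic c ∪ U := Set.subset_union_left
  have hsub2 : U ⊆ Set.Iic c ∪ U := Set.subset_union_right
  have hsub3 : V ⊆ V ∪ Set.Ici c := Set.subset_union_left
  have hsub4 : Set.Ici c ⊆ V ∪ Set.Ici c := Set.subset_union_right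
  refine ⟨θ, ⟨?_, ?_, ?_, ?_, ?_⟩, ?_⟩
  · rw [← huniv]; exact hconT
  · calc restr (Set.Iic c) θ
        = restr (Set.Iic c) (restr (Set.Iic c ∪ U) θ) := (restr_restr hsub1 θ).symm
      _ = restr (Set.Iic c) θA := by rw [hrAT]
      _ = αX := hrXA
  · calc restr (Set.Ici c) θ
        = restr (Set.Ici c) (restr (V ∪ Set.Ici c) θ) := (restr_restr hsub4 θ).symm
      _ = restr (Set.Ici c) θB := by rw [hrBT]
      _ = αY := hrYB
  · calc restr U θ
        = restr U (restr (Set.Iic c ∪ U) θ) := (restr_restr hsub2 θ).symm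
      _ = restr U θA := by rw [hrAT]
      _ = αU := hrUA
  · calc restr V θ
        = restr V (restr (V ∪ Set.Ici c) θ) := (restr_restr hsub3 θ).symm
      _ = restr V θB := by rw [hrBT]
      _ = αV := hrVB
  · rintro β ⟨hβcon, hβX, hβY, hβU, hβV⟩
    have hβA : restr (Set.Iic c ∪ U) β = θA := by
      apply huniqA
      refine ⟨isConOn_restr hβcon (Set.subset_univ _) S1j S1m, ?_, ?_⟩
      · rw [restr_restr hsub1 β]; exact hβX
      · rw [restr_restr hsub2 β]; exact hβU
    have hβB : restr (V ∪ Set.Ici c) β = θB := by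
      apply huniqB
      refine ⟨isConOn_restr hβcon (Set.subset_univ _) S2j hBinf, ?_, ?_⟩
      · rw [restr_restr hsub3 β]; exact hβV
      · rw [restr_restr hsub4 β]; exact hβY
    apply huniqT
    refine ⟨?_, hβA, hβB⟩
    rw [huniv]
    exact hβcon
end

section
/- Let L be a finite lattice, I an ideal of L, and suppose every element x ∈ L \ I satisfies x > a or x > b for two fixed elements a, b ∈ I with a ∨ b ∈ I. Let α be a congruence on I such that α collapses no pair in the filter ↑a ∩ I above a and no pair in ↑b ∩ I (i.e., if u, v ≥ a or u, v ≥ b in I and u α v then u = v). Extend α to an equivalence relation β on L by making each element of L \ I a singleton class. Then β is a congruence on L. -/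
/-- let `I` be an ideal of a finite lattice `L`, let `a, b ∈ I`
with `a ⊔ b ∈ I`, and suppose every `x ∈ L \ I` satisfies `x > a` or `x > b`.
If `α` is a congruence on `I` collapsing no pair above `a` and no pair above
`b`, then its singleton extension `β` is a congruence on `L`. -/
theorem singleton_extension_congruence {L : Type*} [Lattice L] [Finite L]
    (I : Set L) (hne : I.Nonempty)
    (hdown : ∀ x ∈ I, ∀ y : L, y ≤ x → y ∈ I)
    (hjoin : ∀ x ∈ I, ∀ y ∈ I, x ⊔ y ∈ I)
    (a b : L) (ha : a ∈ I) (hb : b ∈ I) (hab : a ⊔ b ∈ I)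
    (hout : ∀ x : L, x ∉ I → a < x ∨ b < x)
    (α : L → L → Prop)
    (hsupp : ∀ x y, α x y → x ∈ I ∧ y ∈ I)
    (hrefl : ∀ x ∈ I, α x x)
    (hsymm : ∀ x y, α x y → α y x)
    (htrans : ∀ x y z, α x y → α y z → α x z)
    (hcompat : ∀ x y z, α x y → z ∈ I → α (x ⊔ z) (y ⊔ z) ∧ α (x ⊓ z) (y ⊓ z))
    (hcolla : ∀ u v, α u v → a ≤ u → a ≤ v → u = v)
    (hcollb : ∀ u v, α u v → b ≤ u → b ≤ v → u = v) :
    -- β x y ↔ x = y ∨ (x, y ∈ I and x α y); β is a congruence on L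
    (∀ x y z : L, (x = y ∨ (x ∈ I ∧ y ∈ I ∧ α x y)) →
      (x ⊔ z = y ⊔ z ∨ (x ⊔ z ∈ I ∧ y ⊔ z ∈ I ∧ α (x ⊔ z) (y ⊔ z)))) ∧
    (∀ x y z : L, (x = y ∨ (x ∈ I ∧ y ∈ I ∧ α x y)) →
      (x ⊓ z = y ⊓ z ∨ (x ⊓ z ∈ I ∧ y ⊓ z ∈ I ∧ α (x ⊓ z) (y ⊓ z)))) := by
  constructor
  · rintro x y z (rfl | ⟨hx, hy, hxy⟩)
    · exact Or.inl rfl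
    by_cases hz : z ∈ I
    · exact Or.inr ⟨hjoin _ hx _ hz, hjoin _ hy _ hz, (hcompat x y z hxy hz).1⟩
    · left
      rcases hout z hz with hlt | hlt
      · have h1 : α (x ⊔ a) (y ⊔ a) := (hcompat x y a hxy ha).1
        have h2 : x ⊔ a = y ⊔ a := hcolla _ _ h1 le_sup_right le_sup_right
        calc x ⊔ z = (x ⊔ a) ⊔ z := by rw [sup_assoc, sup_eq_right.mpr hlt.le]
          _ = (y ⊔ a) ⊔ z := by rw [h2]
          _ = y ⊔ z := by rw [sup_assoc, sup_eq_right.mpr hlt.le]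
      · have h1 : α (x ⊔ b) (y ⊔ b) := (hcompat x y b hxy hb).1
        have h2 : x ⊔ b = y ⊔ b := hcollb _ _ h1 le_sup_right le_sup_right
        calc x ⊔ z = (x ⊔ b) ⊔ z := by rw [sup_assoc, sup_eq_right.mpr hlt.le]
          _ = (y ⊔ b) ⊔ z := by rw [h2]
          _ = y ⊔ z := by rw [sup_assoc, sup_eq_right.mpr hlt.le]
  · rintro x y z (rfl | ⟨hx, hy, hxy⟩)
    · exact Or.inl rfl
    right
    set w := z ⊓ (x ⊔ y) with hw
    have hwI : w ∈ I := hdown _ (hjoin _ hx _ hy) _ inf_le_right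
    have hxw : x ⊓ w = x ⊓ z := by
      rw [hw, ← inf_assoc, inf_eq_left.mpr (le_trans inf_le_left le_sup_left)]
    have hyw : y ⊓ w = y ⊓ z := by
      rw [hw, ← inf_assoc, inf_eq_left.mpr (le_trans inf_le_left le_sup_right)]
    have h1 := (hcompat x y w hxy hwI).2
    rw [hxw, hyw] at h1
    exact ⟨hdown _ hx _ inf_le_left, hdown _ hy _ inf_le_left, h1⟩
end

section
/- Let L be a lattice that is a gluing of an ideal A and a filter B over A ∩ B ≠ ∅. If α is a congruence of L, then α equals α_A ∪ α_B ∪ (α_A ∘ α_B) ∪ (α_B ∘ α_A), where α_A = α↾A and α_B = α↾B. -/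
/-- if `L` is a gluing of an ideal `A` and a filter `B`, then any
congruence `α` of `L` equals `α_A ∪ α_B ∪ (α_A ∘ α_B) ∪ (α_B ∘ α_A)` where
`α_A = α↾A` and `α_B = α↾B`. -/
theorem gluing_congruence_decomposition {L : Type*} [Lattice L] (A B : Set L)
    (hAdown : ∀ x ∈ A, ∀ y : L, y ≤ x → y ∈ A)
    (hAsup : ∀ x ∈ A, ∀ y ∈ A, x ⊔ y ∈ A)
    (hBup : ∀ x ∈ B, ∀ y : L, x ≤ y → y ∈ B)
    (hBinf : ∀ x ∈ B, ∀ y ∈ B, x ⊓ y ∈ B)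
    (hcover : A ∪ B = Set.univ) (hne : (A ∩ B).Nonempty)
    (α : L → L → Prop) (hα : IsConOn Set.univ α) :
    α = glueRel (restr A α) (restr B α) := by
  obtain ⟨_, hrefl, hsymm, htrans, hcomp⟩ := hα
  obtain ⟨c, hcA, hcB⟩ := hne
  have hmem : ∀ x : L, x ∈ A ∨ x ∈ B := by
    intro x
    have : x ∈ A ∪ B := hcover ▸ Set.mem_univ x
    exact this
  funext x y
  apply propext
  constructor
  · intro hxy
    rcases hmem x with hxA | hxB <;> rcases hmem y with hyA | hyB
    · exact Or.inl ⟨hxy, hxA, hyA⟩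
    · -- x ∈ A, y ∈ B : middle element t = x ⊔ (y ⊓ c)
      refine Or.inr (Or.inr (Or.inl ⟨x ⊔ (y ⊓ c), ⟨?_, hxA, ?_⟩, ⟨?_, ?_, hyB⟩⟩))
      · have h1 := (hcomp x y c hxy (Set.mem_univ c)).2
        have h2 := (hcomp (x ⊓ c) (y ⊓ c) x h1 (Set.mem_univ x)).1
        rw [sup_comm (x ⊓ c) x, sup_inf_self, sup_comm (y ⊓ c) x] at h2
        exact h2
      · exact hAsup x hxA (y ⊓ c) (hAdown c hcA (y ⊓ c) inf_le_right)
      · have h2 := (hcomp x y (y ⊓ c) hxy (Set.mem_univ _)).1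
        rw [sup_inf_self] at h2
        exact h2
      · exact hBup (y ⊓ c) (hBinf y hyB c hcB) _ le_sup_right
    · -- x ∈ B, y ∈ A : middle element t = y ⊔ (x ⊓ c)
      refine Or.inr (Or.inr (Or.inr ⟨y ⊔ (x ⊓ c), ⟨?_, hxB, ?_⟩, ⟨?_, ?_, hyA⟩⟩))
      · have h2 := (hcomp y x (x ⊓ c) (hsymm _ _ hxy) (Set.mem_univ _)).1
        rw [sup_inf_self] at h2
        exact hsymm _ _ h2
      · exact hBup (x ⊓ c) (hBinf x hxB c hcB) _ le_sup_right
      · have h1 := (hcomp x y c hxy (Set.mem_univ c)).2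
        have h2 := (hcomp (x ⊓ c) (y ⊓ c) y h1 (Set.mem_univ y)).1
        rw [sup_comm (y ⊓ c) y, sup_inf_self, sup_comm (x ⊓ c) y] at h2
        exact h2
      · exact hAsup y hyA (x ⊓ c) (hAdown c hcA (x ⊓ c) inf_le_right)
    · exact Or.inr (Or.inl ⟨hxy, hxB, hyB⟩)
  · rintro (⟨h, -, -⟩ | ⟨h, -, -⟩ | ⟨t, ⟨h1, -, -⟩, ⟨h2, -, -⟩⟩ | ⟨t, ⟨h1, -, -⟩, ⟨h2, -, -⟩⟩)
    · exact h
    · exact h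
    · exact htrans _ _ _ h1 h2
    · exact htrans _ _ _ h1 h2
end

section
/- Let L be a lattice that is a gluing of an ideal A and a filter B, and let α_A, α_B be congruences of A and B agreeing on A ∩ B. Then the relation α = α_A ∪ α_B ∪ (α_A ∘ α_B) ∪ (α_B ∘ α_A), where the compositions are taken through A ∩ B, is transitive. -/
/-- in a gluing of an ideal `A` and a filter `B`, for congruences
`α_A`, `α_B` agreeing on `A ∩ B`, the relation
`α = α_A ∪ α_B ∪ (α_A ∘ α_B) ∪ (α_B ∘ α_A)` is transitive. -/
theorem gluing_glueRel_transitive {L : Type*} [Lattice L] (A B : Set L)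
    (hAdown : ∀ x ∈ A, ∀ y : L, y ≤ x → y ∈ A)
    (hAsup : ∀ x ∈ A, ∀ y ∈ A, x ⊔ y ∈ A)
    (hBup : ∀ x ∈ B, ∀ y : L, x ≤ y → y ∈ B)
    (hBinf : ∀ x ∈ B, ∀ y ∈ B, x ⊓ y ∈ B)
    (hcover : A ∪ B = Set.univ) (hne : (A ∩ B).Nonempty)
    (αA αB : L → L → Prop) (hαA : IsConOn A αA) (hαB : IsConOn B αB)
    (hagree : restr (A ∩ B) αA = restr (A ∩ B) αB) :
    ∀ x y z : L, glueRel αA αB x y → glueRel αA αB y z → glueRel αA αB x z := by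
  obtain ⟨hAdom, -, -, hAt, -⟩ := hαA
  obtain ⟨hBdom, -, -, hBt, -⟩ := hαB
  have hAB : ∀ x y, αA x y → x ∈ B → y ∈ B → αB x y := by
    intro x y h hx hy
    have : restr (A ∩ B) αB x y := by
      rw [← hagree]
      exact ⟨h, ⟨(hAdom x y h).1, hx⟩, ⟨(hAdom x y h).2, hy⟩⟩
    exact this.1
  have hBA : ∀ x y, αB x y → x ∈ A → y ∈ A → αA x y := by
    intro x y h hx hy
    have : restr (A ∩ B) αA x y := by
      rw [hagree]
      exact ⟨h, ⟨hx, (hBdom x y h).1⟩, ⟨hy, (hBdom x y h).2⟩⟩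
    exact this.1
  intro x y z hxy hyz
  rcases hxy with h1 | h1 | ⟨s, h1, h2⟩ | ⟨s, h1, h2⟩ <;>
    rcases hyz with h3 | h3 | ⟨t, h3, h4⟩ | ⟨t, h3, h4⟩
  · exact Or.inl (hAt _ _ _ h1 h3)
  · exact Or.inr (Or.inr (Or.inl ⟨y, h1, h3⟩))
  · exact Or.inr (Or.inr (Or.inl ⟨t, hAt _ _ _ h1 h3, h4⟩))
  · exact Or.inl (hAt _ _ _ h1 (hAt _ _ _
      (hBA _ _ h3 (hAdom _ _ h1).2 (hAdom _ _ h4).1) h4))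
  · exact Or.inr (Or.inr (Or.inr ⟨y, h1, h3⟩))
  · exact Or.inr (Or.inl (hBt _ _ _ h1 h3))
  · exact Or.inr (Or.inl (hBt _ _ _ h1 (hBt _ _ _
      (hAB _ _ h3 (hBdom _ _ h1).2 (hBdom _ _ h4).1) h4)))
  · exact Or.inr (Or.inr (Or.inr ⟨t, hBt _ _ _ h1 h3, h4⟩))
  · exact Or.inl (hAt _ _ _ h1 (hAt _ _ _
      (hBA _ _ h2 (hAdom _ _ h1).2 (hAdom _ _ h3).1) h3))
  · exact Or.inr (Or.inr (Or.inl ⟨s, h1, hBt _ _ _ h2 h3⟩))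
  · exact Or.inr (Or.inr (Or.inl ⟨t, hAt _ _ _ (hAt _ _ _ h1
      (hBA _ _ h2 (hAdom _ _ h1).2 (hAdom _ _ h3).1)) h3, h4⟩))
  · exact Or.inl (hAt _ _ _ (hAt _ _ _ h1
      (hBA _ _ (hBt _ _ _ h2 h3) (hAdom _ _ h1).2 (hAdom _ _ h4).1)) h4)
  · exact Or.inr (Or.inr (Or.inr ⟨s, h1, hAt _ _ _ h2 h3⟩))
  · exact Or.inr (Or.inl (hBt _ _ _ h1 (hBt _ _ _
      (hAB _ _ h2 (hBdom _ _ h1).2 (hBdom _ _ h3).1) h3)))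
  · exact Or.inr (Or.inl (hBt _ _ _ h1 (hBt _ _ _
      (hAB _ _ (hAt _ _ _ h2 h3) (hBdom _ _ h1).2 (hBdom _ _ h4).1) h4)))
  · exact Or.inr (Or.inr (Or.inr ⟨s, h1, hAt _ _ _ h2 (hAt _ _ _
      (hBA _ _ h3 (hAdom _ _ h2).2 (hAdom _ _ h4).1) h4)⟩))
end
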